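/- arXiv:2407.18577 — 3 statements merged into one kernel-verified Lean document; each statement's English description precedes it below -/
import Mathlib

section
/- Let p, q ≥ 1. The model diamond 𝔻 and the dual model diamond 𝔻' are open and connected subsets of Ein^{p,q}; for every x ∈ 𝔻 and every y ∈ 𝔻' one has B(u, u') ≠ 0 for any representatives u of x and u' of y (so x ∉ C(y)); and 𝔻 is a proper domain: there exists y ∈ Ein^{p,q} with closure(𝔻) ∩ C(y) = ∅. -/
noncomputable section

open scoped LinearAlgebra.Projectivization ENNReal
open Projectivization Filter Topology Set

variable {W : Type} [AddCommGroup W] [Module ℝ W] [TopologicalSpace W]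

instance projTopology : TopologicalSpace (ℙ ℝ W) :=
  inferInstanceAs (TopologicalSpace (Quotient (projectivizationSetoid ℝ W)))

/-- The null cone in projective space determined by a quadratic form `v ↦ Bf v v`. -/
def einSet (Bf : W → W → ℝ) : Set (ℙ ℝ W) := {x | Bf x.rep x.rep = 0}

/-- The lightcone of a point of the Einstein universe. -/
def lightcone (Bf : W → W → ℝ) (x : ℙ ℝ W) : Set (ℙ ℝ W) :=
  {y | y ∈ einSet Bf ∧ Bf x.rep y.rep = 0}

/-- A domain: nonempty connected open subset of the Einstein universe
(open and connected in the subspace topology of `einSet Bf`). -/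
def IsEinDomain (Bf : W → W → ℝ) (Ω : Set (ℙ ℝ W)) : Prop :=
  Ω ⊆ einSet Bf ∧
  IsOpen (Subtype.val ⁻¹' Ω : Set (einSet Bf)) ∧
  IsConnected (Subtype.val ⁻¹' Ω : Set (einSet Bf))

/-- A proper domain: some lightcone misses the closure. -/
def IsProperDomain (Bf : W → W → ℝ) (Ω : Set (ℙ ℝ W)) : Prop :=
  IsEinDomain Bf Ω ∧ ∃ x ∈ einSet Bf, closure Ω ∩ lightcone Bf x = ∅

/-- The projective transformation induced by a linear automorphism. -/
def projMap (g : W ≃ₗ[ℝ] W) : ℙ ℝ W → ℙ ℝ W :=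
  Projectivization.map (g : W →ₗ[ℝ] W) g.injective

/-- The conformal group of a domain. -/
def Conf (Bf : W → W → ℝ) (Ω : Set (ℙ ℝ W)) : Set (W ≃ₗ[ℝ] W) :=
  {g | (∀ v, Bf (g v) (g v) = Bf v v) ∧ projMap g '' Ω = Ω}

/-- Quasi-homogeneity of a domain. -/
def IsQuasiHomogeneous (Bf : W → W → ℝ) (Ω : Set (ℙ ℝ W)) : Prop :=
  ∃ K : Set (ℙ ℝ W), K ⊆ Ω ∧ IsCompact K ∧
    Ω = ⋃ g ∈ Conf Bf Ω, projMap g '' K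

/-- Dual convexity: every frontier point admits a supporting lightcone. -/
def IsDuallyConvex (Bf : W → W → ℝ) (Ω : Set (ℙ ℝ W)) : Prop :=
  ∀ a ∈ closure Ω \ Ω, ∃ b ∈ einSet Bf, a ∈ lightcone Bf b ∧ lightcone Bf b ∩ Ω = ∅

/-- The hyperbolic distance on the interval `(-1,1)`. -/
def dHyp (s t : ℝ) : ℝ := |Real.log (((1 + t) * (1 - s)) / ((1 - t) * (1 + s)))|

/-- The interval of parameters. -/
def II : Set ℝ := Set.Ioo (-1 : ℝ) 1

/-- A projectively parametrized lightlike geodesic with values in `Ω`. -/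
def IsLightGeodesic (Bf : W → W → ℝ) (Ω : Set (ℙ ℝ W)) (α : ℝ → ℙ ℝ W) : Prop :=
  ∃ (u w : W) (a b c d : ℝ),
    LinearIndependent ℝ ![u, w] ∧
    Bf u u = 0 ∧ Bf u w = 0 ∧ Bf w w = 0 ∧
    a * d - b * c ≠ 0 ∧
    ∀ t ∈ II, ∃ h : (a * t + b) • u + (c * t + d) • w ≠ 0,
      α t = Projectivization.mk ℝ ((a * t + b) • u + (c * t + d) • w) h ∧ α t ∈ Ω

/-- `IsChainCost Bf Ω x y N c` : there is a chain of index `N` from `x` to `y` in `Ω`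
whose cost is `c`. -/
def IsChainCost (Bf : W → W → ℝ) (Ω : Set (ℙ ℝ W)) (x y : ℙ ℝ W) (N : ℕ) (c : ℝ) : Prop :=
  ∃ (xs : Fin (N + 1) → ℙ ℝ W) (αs : Fin N → ℝ → ℙ ℝ W) (ss ts : Fin N → ℝ),
    xs 0 = x ∧ xs (Fin.last N) = y ∧
    (∀ i : Fin N, IsLightGeodesic Bf Ω (αs i) ∧ ss i ∈ II ∧ ts i ∈ II ∧
      αs i (ss i) = xs i.castSucc ∧ αs i (ts i) = xs i.succ) ∧
    c = ∑ i : Fin N, dHyp (ss i) (ts i)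

/-- The Markowitz pseudodistance of `Ω`, with values in `[0,∞]`. -/
def markowitz (Bf : W → W → ℝ) (Ω : Set (ℙ ℝ W)) (x y : ℙ ℝ W) : ℝ≥0∞ :=
  sInf {e | ∃ (N : ℕ) (c : ℝ), 1 ≤ N ∧ IsChainCost Bf Ω x y N c ∧ e = ENNReal.ofReal c}

/-- The Markowitz pseudodistance restricted to chains of index at most `Nmax`. -/
def markowitzN (Bf : W → W → ℝ) (Ω : Set (ℙ ℝ W)) (Nmax : ℕ) (x y : ℙ ℝ W) : ℝ≥0∞ :=
  sInf {e | ∃ (N : ℕ) (c : ℝ), 1 ≤ N ∧ N ≤ Nmax ∧ IsChainCost Bf Ω x y N c ∧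
    e = ENNReal.ofReal c}

/-- The projectivization of a linear subspace. -/
def projSet (Pl : Submodule ℝ W) : Set (ℙ ℝ W) := {y | y.rep ∈ Pl}

/-- A photon subspace: a totally isotropic plane. -/
def IsPhotonSub (Bf : W → W → ℝ) (Pl : Submodule ℝ W) : Prop :=
  Module.finrank ℝ Pl = 2 ∧ ∀ u ∈ Pl, ∀ w ∈ Pl, Bf u w = 0

/-- Photon-extremal points of the frontier of `Ω`. -/
def IsPhotonExtremal (Bf : W → W → ℝ) (Ω : Set (ℙ ℝ W)) (a : ℙ ℝ W) : Prop :=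
  a ∈ closure Ω \ Ω ∧
  ∀ Pl : Submodule ℝ W, IsPhotonSub Bf Pl → a.rep ∈ Pl →
    ¬ ∃ U : Set (ℙ ℝ W), IsOpen U ∧ a ∈ U ∧ U ∩ projSet Pl ⊆ closure Ω

/-- A maximal projectively parametrized lightlike geodesic in `Ω`: its image is
a connected component of `ℙ(Pl) ∩ Ω`. -/
def IsMaxLightGeodesic (Bf : W → W → ℝ) (Ω : Set (ℙ ℝ W)) (α : ℝ → ℙ ℝ W) : Prop :=
  ∃ (u w : W) (a b c d : ℝ),
    LinearIndependent ℝ ![u, w] ∧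
    Bf u u = 0 ∧ Bf u w = 0 ∧ Bf w w = 0 ∧
    a * d - b * c ≠ 0 ∧
    (∀ t ∈ II, ∃ h : (a * t + b) • u + (c * t + d) • w ≠ 0,
      α t = Projectivization.mk ℝ ((a * t + b) • u + (c * t + d) • w) h ∧ α t ∈ Ω) ∧
    α '' II = connectedComponentIn (projSet (Submodule.span ℝ {u, w}) ∩ Ω) (α 0)

/-- The coordinate bilinear form of signature `(p+1, q+1)` on `ℝⁿ`, `n = p+q+2`. -/
def bForm (p q : ℕ) (v w : Fin (p + q + 2) → ℝ) : ℝ :=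
  ∑ i : Fin (p + q + 2), (if (i : ℕ) ≤ p then (-1 : ℝ) else 1) * v i * w i

/-! ### The product model of `ℝⁿ`, `n = p+q+2`, with `B = B₀ ⊕ B₁`. -/

/-- The bilinear form `B₀` of signature `(p,1)` on `ℝ^{p+1}`. -/
def b0 (p : ℕ) (v v' : Fin (p + 1) → ℝ) : ℝ :=
  ∑ i : Fin (p + 1), (if (i : ℕ) < p then (-1 : ℝ) else 1) * v i * v' i

/-- The bilinear form `B₁` of signature `(1,q)` on `ℝ^{q+1}`. -/
def b1 (q : ℕ) (w w' : Fin (q + 1) → ℝ) : ℝ :=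
  ∑ i : Fin (q + 1), (if (i : ℕ) < q then (1 : ℝ) else -1) * w i * w' i

/-- `ℝⁿ` written as pairs `(v, w)` with `v ∈ ℝ^{p+1}`, `w ∈ ℝ^{q+1}`. -/
abbrev PairV (p q : ℕ) := (Fin (p + 1) → ℝ) × (Fin (q + 1) → ℝ)

/-- The bilinear form `B = B₀ ⊕ B₁` of signature `(p+1, q+1)`. -/
def bPair (p q : ℕ) (x y : PairV p q) : ℝ := b0 p x.1 y.1 + b1 q x.2 y.2

/-- The model diamond `𝔻 ⊆ Ein^{p,q}`. -/
def diamond (p q : ℕ) : Set (ℙ ℝ (PairV p q)) :=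
  {x | ∃ (vw : PairV p q) (h : vw ≠ 0), x = Projectivization.mk ℝ vw h ∧
    b0 p vw.1 vw.1 = 1 ∧ 0 < vw.1 (Fin.last p) ∧
    b1 q vw.2 vw.2 = -1 ∧ 0 < vw.2 (Fin.last q)}

/-- The dual model diamond `𝔻' ⊆ Ein^{p,q}`. -/
def diamondDual (p q : ℕ) : Set (ℙ ℝ (PairV p q)) :=
  {x | ∃ (vw : PairV p q) (h : vw ≠ 0), x = Projectivization.mk ℝ vw h ∧
    b0 p vw.1 vw.1 = 1 ∧ 0 < vw.1 (Fin.last p) ∧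
    b1 q vw.2 vw.2 = -1 ∧ vw.2 (Fin.last q) < 0}

section helperAlg

lemma fin_ne_last_iff {m : ℕ} {i : Fin (m+1)} : (i : ℕ) < m ↔ i ≠ Fin.last m := by
  constructor
  · intro h hl; rw [hl] at h; simp [Fin.last] at h
  · exact Fin.val_lt_last

lemma b0_smul (p : ℕ) (a b : ℝ) (v v' : Fin (p+1) → ℝ) :
    b0 p (a • v) (b • v') = a * b * b0 p v v' := by
  unfold b0
  rw [Finset.mul_sum]
  refine Finset.sum_congr rfl fun i _ => ?_
  simp only [Pi.smul_apply, smul_eq_mul]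
  ring

lemma b1_smul (q : ℕ) (a b : ℝ) (w w' : Fin (q+1) → ℝ) :
    b1 q (a • w) (b • w') = a * b * b1 q w w' := by
  unfold b1
  rw [Finset.mul_sum]
  refine Finset.sum_congr rfl fun i _ => ?_
  simp only [Pi.smul_apply, smul_eq_mul]
  ring

lemma bPair_smul (p q : ℕ) (a b : ℝ) (u u' : PairV p q) :
    bPair p q (a • u) (b • u') = a * b * bPair p q u u' := by
  unfold bPair
  rw [Prod.smul_fst, Prod.smul_snd, Prod.smul_fst, Prod.smul_snd, b0_smul, b1_smul, mul_add]

lemma b0_comm (p : ℕ) (v v' : Fin (p+1) → ℝ) : b0 p v v' = b0 p v' v := by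
  unfold b0; exact Finset.sum_congr rfl fun i _ => by ring

lemma b1_comm (q : ℕ) (w w' : Fin (q+1) → ℝ) : b1 q w w' = b1 q w' w := by
  unfold b1; exact Finset.sum_congr rfl fun i _ => by ring

lemma bPair_comm (p q : ℕ) (u u' : PairV p q) : bPair p q u u' = bPair p q u' u := by
  unfold bPair; rw [b0_comm, b1_comm]

lemma b0_cross (p : ℕ) (v v' : Fin (p+1) → ℝ) :
    b0 p v v' = v (Fin.last p) * v' (Fin.last p)
      - ∑ i ∈ Finset.univ.erase (Fin.last p), v i * v' i := by
  unfold b0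
  rw [← Finset.add_sum_erase _ _ (Finset.mem_univ (Fin.last p))]
  have h1 : (if ((Fin.last p : Fin (p+1)) : ℕ) < p then (-1:ℝ) else 1) = 1 := by
    simp [Fin.last]
  rw [h1, one_mul]
  have h2 : ∑ i ∈ Finset.univ.erase (Fin.last p),
      (if (i : ℕ) < p then (-1:ℝ) else 1) * v i * v' i
      = ∑ i ∈ Finset.univ.erase (Fin.last p), -(v i * v' i) := by
    refine Finset.sum_congr rfl fun i hi => ?_
    have : (i : ℕ) < p := fin_ne_last_iff.2 (Finset.ne_of_mem_erase hi)
    rw [if_pos this]; ring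
  rw [h2, Finset.sum_neg_distrib]
  ring

lemma b1_cross (q : ℕ) (w w' : Fin (q+1) → ℝ) :
    b1 q w w' = (∑ i ∈ Finset.univ.erase (Fin.last q), w i * w' i)
      - w (Fin.last q) * w' (Fin.last q) := by
  unfold b1
  rw [← Finset.add_sum_erase _ _ (Finset.mem_univ (Fin.last q))]
  have h1 : (if ((Fin.last q : Fin (q+1)) : ℕ) < q then (1:ℝ) else -1) = -1 := by
    simp [Fin.last]
  rw [h1]
  have h2 : ∑ i ∈ Finset.univ.erase (Fin.last q),
      (if (i : ℕ) < q then (1:ℝ) else -1) * w i * w' i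
      = ∑ i ∈ Finset.univ.erase (Fin.last q), w i * w' i := by
    refine Finset.sum_congr rfl fun i hi => ?_
    have : (i : ℕ) < q := fin_ne_last_iff.2 (Finset.ne_of_mem_erase hi)
    rw [if_pos this]; ring
  rw [h2]
  ring

lemma b0_self (p : ℕ) (v : Fin (p+1) → ℝ) :
    b0 p v v = v (Fin.last p) ^ 2 - ∑ i ∈ Finset.univ.erase (Fin.last p), v i ^ 2 := by
  rw [b0_cross]; simp [pow_two]

lemma b1_self (q : ℕ) (w : Fin (q+1) → ℝ) :
    b1 q w w = (∑ i ∈ Finset.univ.erase (Fin.last q), w i ^ 2) - w (Fin.last q) ^ 2 := by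
  rw [b1_cross]; simp [pow_two]

/-- Cauchy–Schwarz step. -/
lemma cs_aux {m : ℕ} (v v' : Fin (m+1) → ℝ)
    (h : v (Fin.last m) ^ 2 = 1 + ∑ i ∈ Finset.univ.erase (Fin.last m), v i ^ 2)
    (h' : v' (Fin.last m) ^ 2 = 1 + ∑ i ∈ Finset.univ.erase (Fin.last m), v' i ^ 2)
    (hv : 0 < v (Fin.last m)) (hv' : 0 < v' (Fin.last m)) :
    ∑ i ∈ Finset.univ.erase (Fin.last m), v i * v' i
      < v (Fin.last m) * v' (Fin.last m) := by
  set A := ∑ i ∈ Finset.univ.erase (Fin.last m), v i * v' i with hA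
  have hCS : A ^ 2 ≤ (∑ i ∈ Finset.univ.erase (Fin.last m), v i ^ 2)
      * ∑ i ∈ Finset.univ.erase (Fin.last m), v' i ^ 2 :=
    Finset.sum_mul_sq_le_sq_mul_sq _ _ _
  have hS : (0:ℝ) ≤ ∑ i ∈ Finset.univ.erase (Fin.last m), v i ^ 2 :=
    Finset.sum_nonneg fun i _ => sq_nonneg _
  have hS' : (0:ℝ) ≤ ∑ i ∈ Finset.univ.erase (Fin.last m), v' i ^ 2 :=
    Finset.sum_nonneg fun i _ => sq_nonneg _
  nlinarith [mul_pos hv hv', sq_nonneg (v (Fin.last m) - v' (Fin.last m)),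
    sq_nonneg (v (Fin.last m) * v' (Fin.last m))]

/-- Positivity of `B` between a diamond representative and a dual-diamond representative. -/
lemma cross_pos (p q : ℕ) (u u' : PairV p q)
    (h1 : b0 p u.1 u.1 = 1) (h2 : 0 < u.1 (Fin.last p))
    (h3 : b1 q u.2 u.2 = -1) (h4 : 0 < u.2 (Fin.last q))
    (h1' : b0 p u'.1 u'.1 = 1) (h2' : 0 < u'.1 (Fin.last p))
    (h3' : b1 q u'.2 u'.2 = -1) (h4' : u'.2 (Fin.last q) < 0) :
    0 < bPair p q u u' := by
  have e1 := b0_self p u.1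
  have e1' := b0_self p u'.1
  have e3 := b1_self q u.2
  have e3' := b1_self q u'.2
  have c0 : ∑ i ∈ Finset.univ.erase (Fin.last p), u.1 i * u'.1 i
      < u.1 (Fin.last p) * u'.1 (Fin.last p) := by
    refine cs_aux _ _ ?_ ?_ h2 h2' <;> linarith
  have key2 : ∑ i ∈ Finset.univ.erase (Fin.last q), u.2 i * (-(u'.2 i))
      < u.2 (Fin.last q) * (-(u'.2 (Fin.last q))) := by
    have := cs_aux u.2 (fun i => -(u'.2 i)) (by linarith)
      (by simp only [neg_sq]; linarith) h4 (by simpa using h4')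
    simpa using this
  have c1 : u.2 (Fin.last q) * u'.2 (Fin.last q)
      < ∑ i ∈ Finset.univ.erase (Fin.last q), u.2 i * u'.2 i := by
    have hs : ∑ i ∈ Finset.univ.erase (Fin.last q), u.2 i * (-(u'.2 i))
        = -∑ i ∈ Finset.univ.erase (Fin.last q), u.2 i * u'.2 i := by
      rw [← Finset.sum_neg_distrib]; exact Finset.sum_congr rfl fun i _ => by ring
    rw [hs] at key2; linarith
  have g0 : 0 < b0 p u.1 u'.1 := by rw [b0_cross]; linarith
  have g1 : 0 < b1 q u.2 u'.2 := by rw [b1_cross]; linarith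
  unfold bPair; linarith

end helperAlg

section helperTop

variable {p q : ℕ}

/-- The generalized diamond, parameterized by a sign `ε`. -/
def gset (p q : ℕ) (ε : ℝ) : Set (ℙ ℝ (PairV p q)) :=
  {x | ∃ (vw : PairV p q) (h : vw ≠ 0), x = Projectivization.mk ℝ vw h ∧
    b0 p vw.1 vw.1 = 1 ∧ 0 < vw.1 (Fin.last p) ∧
    b1 q vw.2 vw.2 = -1 ∧ 0 < ε * vw.2 (Fin.last q)}

lemma gset_one (p q : ℕ) : gset p q 1 = diamond p q := by
  unfold gset diamond; simp [one_mul]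

lemma gset_neg (p q : ℕ) : gset p q (-1) = diamondDual p q := by
  unfold gset diamondDual
  refine Set.ext fun x => ?_
  constructor <;> rintro ⟨vw, h, hx, c1, c2, c3, c4⟩ <;>
    exact ⟨vw, h, hx, c1, c2, c3, by linarith⟩

lemma continuous_projMk :
    Continuous (fun s : {v : PairV p q // v ≠ 0} => Projectivization.mk ℝ s.1 s.2) := by
  letI : Setoid {v : PairV p q // v ≠ 0} := projectivizationSetoid ℝ (PairV p q)
  have : Continuous (Quotient.mk' : {v : PairV p q // v ≠ 0}
      → Quotient (projectivizationSetoid ℝ (PairV p q))) := continuous_quotient_mk'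
  exact this

lemma rep_eq_smul (u : PairV p q) (hu : u ≠ 0) :
    ∃ a : ℝ, a ≠ 0 ∧ (Projectivization.mk ℝ u hu).rep = a • u := by
  obtain ⟨a, ha⟩ := Projectivization.exists_smul_eq_mk_rep ℝ u hu
  exact ⟨(a : ℝ), a.ne_zero, by rw [← ha, Units.smul_def]⟩

lemma mk_smul_eq (u : PairV p q) (hu : u ≠ 0) (a : ℝ) (ha : a ≠ 0)
    (h' : a • u ≠ 0) : Projectivization.mk ℝ (a • u) h' = Projectivization.mk ℝ u hu :=
  (Projectivization.mk_eq_mk_iff' ℝ _ _ _ _).2 ⟨a, rfl⟩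

/-- Openness of the set of points whose representative lies in a scale-invariant open cone. -/
lemma isOpen_repSet (S : Set (PairV p q)) (hS : IsOpen S)
    (hinv : ∀ (a : ℝ), a ≠ 0 → ∀ u : PairV p q, u ∈ S ↔ a • u ∈ S) :
    IsOpen {x : ℙ ℝ (PairV p q) | x.rep ∈ S} := by
  letI : Setoid {v : PairV p q // v ≠ 0} := projectivizationSetoid ℝ (PairV p q)
  have hq : IsQuotientMap (Quotient.mk' : {v : PairV p q // v ≠ 0}
      → Quotient (projectivizationSetoid ℝ (PairV p q))) := isQuotientMap_quotient_mk'
  refine hq.isOpen_preimage.1 (?_ : IsOpen (Quotient.mk' ⁻¹' {x : ℙ ℝ (PairV p q) | x.rep ∈ S}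
      : Set {v : PairV p q // v ≠ 0}))
  have heq : (Quotient.mk' ⁻¹' {x : ℙ ℝ (PairV p q) | x.rep ∈ S}
      : Set {v : PairV p q // v ≠ 0}) = Subtype.val ⁻¹' S := by
    ext u
    simp only [Set.mem_preimage, Set.mem_setOf_eq]
    have hmk : (Quotient.mk' u : ℙ ℝ (PairV p q)) = Projectivization.mk ℝ u.1 u.2 := rfl
    rw [hmk]
    obtain ⟨a, ha, hrep⟩ := rep_eq_smul u.1 u.2
    change (Projectivization.mk ℝ u.1 u.2).rep ∈ S ↔ (u : PairV p q) ∈ S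
    rw [hrep]
    exact (hinv a ha u.1).symm
  rw [heq]
  exact hS.preimage continuous_subtype_val

lemma continuous_b0self : Continuous (fun u : PairV p q => b0 p u.1 u.1) := by
  unfold b0
  exact continuous_finset_sum _ fun i _ =>
    (continuous_const.mul ((continuous_apply i).comp continuous_fst)).mul
      ((continuous_apply i).comp continuous_fst)

lemma continuous_lastProd :
    Continuous (fun u : PairV p q => u.1 (Fin.last p) * u.2 (Fin.last q)) :=
  ((continuous_apply (Fin.last p)).comp continuous_fst).mul
    ((continuous_apply (Fin.last q)).comp continuous_snd)

/-- Forward direction: a point of the generalized diamond has positive invariants. -/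
lemma gset_rep_pos {ε : ℝ} {x : ℙ ℝ (PairV p q)} (hx : x ∈ gset p q ε) :
    0 < b0 p x.rep.1 x.rep.1 ∧ 0 < ε * (x.rep.1 (Fin.last p) * x.rep.2 (Fin.last q)) := by
  obtain ⟨vw, h, hxe, c1, c2, c3, c4⟩ := hx
  obtain ⟨a, ha, hrep⟩ := rep_eq_smul vw h
  rw [hxe, hrep]
  have hfst : (a • vw).1 = a • vw.1 := rfl
  have hsnd : (a • vw).2 = a • vw.2 := rfl
  constructor
  · rw [hfst, b0_smul, c1, mul_one]
    exact mul_self_pos.2 ha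
  · rw [hfst, hsnd]
    simp only [Pi.smul_apply, smul_eq_mul]
    nlinarith [mul_pos (mul_self_pos.2 ha) (mul_pos c2 c4)]

/-- Reverse direction: a null point with positive invariants lies in the generalized diamond. -/
lemma gset_of_rep {ε : ℝ} (hε : ε = 1 ∨ ε = -1) {x : ℙ ℝ (PairV p q)}
    (hnull : bPair p q x.rep x.rep = 0)
    (h0 : 0 < b0 p x.rep.1 x.rep.1)
    (h1 : 0 < ε * (x.rep.1 (Fin.last p) * x.rep.2 (Fin.last q))) :
    x ∈ gset p q ε := by
  set v := x.rep.1 with hv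
  set w := x.rep.2 with hw
  set c : ℝ := Real.sqrt (b0 p v v) with hc
  have hcpos : 0 < c := Real.sqrt_pos.2 h0
  have hcsq : c ^ 2 = b0 p v v := Real.sq_sqrt h0.le
  set lam : ℝ := if 0 < v (Fin.last p) then c⁻¹ else -c⁻¹ with hlam
  have hlamne : lam ≠ 0 := by
    rw [hlam]; split <;> simp [hcpos.ne']
  have hlamsq : lam ^ 2 = (c ^ 2)⁻¹ := by
    rw [hlam]; split <;> simp [neg_sq, inv_pow]
  have hvlne : v (Fin.last p) ≠ 0 := by
    intro h; rw [h] at h1; simp at h1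
  have hlamsgn : 0 < lam * v (Fin.last p) := by
    rw [hlam]; split
    · exact mul_pos (inv_pos.2 hcpos) (by assumption)
    · have : v (Fin.last p) < 0 := lt_of_le_of_ne (not_lt.1 (by assumption)) hvlne
      exact mul_pos_of_neg_of_neg (by simp [hcpos]) this
  have hne : lam • x.rep ≠ 0 := smul_ne_zero hlamne x.rep_nonzero
  refine ⟨lam • x.rep, hne, ?_, ?_, ?_, ?_, ?_⟩
  · rw [mk_smul_eq x.rep x.rep_nonzero lam hlamne hne, Projectivization.mk_rep]
  · show b0 p (lam • v) (lam • v) = 1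
    rw [b0_smul, ← pow_two, hlamsq, hcsq]
    exact inv_mul_cancel₀ h0.ne'
  · show 0 < (lam • v) (Fin.last p)
    simpa using hlamsgn
  · show b1 q (lam • w) (lam • w) = -1
    have hb1 : b1 q w w = -(b0 p v v) := by
      have : b0 p v v + b1 q w w = 0 := hnull
      linarith
    rw [b1_smul, ← pow_two, hlamsq, hcsq, hb1]
    field_simp
  · show 0 < ε * (lam • w) (Fin.last q)
    have : (lam • w) (Fin.last q) = lam * w (Fin.last q) := rfl
    rw [this]
    have hvl2 : 0 < v (Fin.last p) ^ 2 := by positivity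
    nlinarith [mul_pos hlamsgn h1]

end helperTop

section helperMore

variable {p q : ℕ}

lemma mk_mem_einSet (u : PairV p q) (hu : u ≠ 0) (h : bPair p q u u = 0) :
    Projectivization.mk ℝ u hu ∈ einSet (bPair p q) := by
  obtain ⟨a, ha, hrep⟩ := rep_eq_smul u hu
  show bPair p q _ _ = 0
  rw [hrep, bPair_smul, h, mul_zero]

lemma gset_subset_einSet (ε : ℝ) : gset p q ε ⊆ einSet (bPair p q) := by
  rintro x ⟨vw, h, rfl, c1, _, c3, _⟩
  exact mk_mem_einSet vw h (by unfold bPair; rw [c1, c3]; ring)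

lemma aux_pos_iff (a t : ℝ) (ha : a ≠ 0) : 0 < a * a * t ↔ 0 < t := by
  have h2 := mul_self_pos.2 ha
  constructor <;> intro h <;> nlinarith

lemma isOpen_gset_preimage (ε : ℝ) (hε : ε = 1 ∨ ε = -1) :
    IsOpen (Subtype.val ⁻¹' gset p q ε : Set (einSet (bPair p q))) := by
  set S : Set (PairV p q) :=
    {u | 0 < b0 p u.1 u.1 ∧ 0 < ε * (u.1 (Fin.last p) * u.2 (Fin.last q))} with hSdef
  have hS : IsOpen S := by
    refine IsOpen.inter ?_ ?_
    · exact isOpen_lt continuous_const continuous_b0self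
    · exact isOpen_lt continuous_const (continuous_const.mul continuous_lastProd)
  have hinv : ∀ (a : ℝ), a ≠ 0 → ∀ u : PairV p q, u ∈ S ↔ a • u ∈ S := by
    intro a ha u
    have e1 : b0 p (a • u).1 (a • u).1 = a * a * b0 p u.1 u.1 := b0_smul p a a u.1 u.1
    have e2 : ε * ((a • u).1 (Fin.last p) * (a • u).2 (Fin.last q))
        = a * a * (ε * (u.1 (Fin.last p) * u.2 (Fin.last q))) := by
      show ε * ((a • u.1) (Fin.last p) * (a • u.2) (Fin.last q)) = _
      simp only [Pi.smul_apply, smul_eq_mul]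
      ring
    constructor
    · rintro ⟨h1, h2⟩
      exact ⟨by rw [e1]; exact (aux_pos_iff a _ ha).2 h1,
        by rw [e2]; exact (aux_pos_iff a _ ha).2 h2⟩
    · rintro ⟨h1, h2⟩
      rw [e1] at h1; rw [e2] at h2
      exact ⟨(aux_pos_iff a _ ha).1 h1, (aux_pos_iff a _ ha).1 h2⟩
  have hU : IsOpen {x : ℙ ℝ (PairV p q) | x.rep ∈ S} := isOpen_repSet S hS hinv
  have heq : (Subtype.val ⁻¹' gset p q ε : Set (einSet (bPair p q)))
      = Subtype.val ⁻¹' {x : ℙ ℝ (PairV p q) | x.rep ∈ S} := by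
    ext ⟨x, hx⟩
    have hx0 : bPair p q x.rep x.rep = 0 := hx
    simp only [Set.mem_preimage, Set.mem_setOf_eq]
    constructor
    · intro h
      exact gset_rep_pos h
    · rintro ⟨h1, h2⟩
      exact gset_of_rep hε hx0 h1 h2
  rw [heq]
  exact hU.preimage continuous_subtype_val

/-- The parametrizing map of the "mass shell" `{v ∣ v_last² = 1 + Σ, sign(v_last) = sign ε}`. -/
def cF (m : ℕ) (ε : ℝ) (a : Fin (m+1) → ℝ) : Fin (m+1) → ℝ := fun i =>
  if i = Fin.last m then
    ε * Real.sqrt (1 + ∑ j ∈ Finset.univ.erase (Fin.last m), a j ^ 2)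
  else a i

lemma cF_last (m : ℕ) (ε : ℝ) (a : Fin (m+1) → ℝ) :
    cF m ε a (Fin.last m)
      = ε * Real.sqrt (1 + ∑ j ∈ Finset.univ.erase (Fin.last m), a j ^ 2) := if_pos rfl

lemma cF_ne (m : ℕ) (ε : ℝ) (a : Fin (m+1) → ℝ) {i : Fin (m+1)} (h : i ≠ Fin.last m) :
    cF m ε a i = a i := if_neg h

lemma cF_sum_sq (m : ℕ) (ε : ℝ) (a : Fin (m+1) → ℝ) :
    ∑ i ∈ Finset.univ.erase (Fin.last m), (cF m ε a i) ^ 2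
      = ∑ i ∈ Finset.univ.erase (Fin.last m), a i ^ 2 :=
  Finset.sum_congr rfl fun i hi => by rw [cF_ne m ε a (Finset.ne_of_mem_erase hi)]

lemma cF_last_sq (m : ℕ) {ε : ℝ} (hε : ε = 1 ∨ ε = -1) (a : Fin (m+1) → ℝ) :
    (cF m ε a (Fin.last m)) ^ 2 = 1 + ∑ j ∈ Finset.univ.erase (Fin.last m), a j ^ 2 := by
  have hpos : (0:ℝ) ≤ 1 + ∑ j ∈ Finset.univ.erase (Fin.last m), a j ^ 2 := by positivity
  have hε2 : ε ^ 2 = 1 := by rcases hε with h | h <;> rw [h] <;> norm_num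
  rw [cF_last, mul_pow, hε2, one_mul, Real.sq_sqrt hpos]

lemma cF_last_sign (m : ℕ) {ε : ℝ} (hε : ε = 1 ∨ ε = -1) (a : Fin (m+1) → ℝ) :
    0 < ε * cF m ε a (Fin.last m) := by
  have hpos : (0:ℝ) < 1 + ∑ j ∈ Finset.univ.erase (Fin.last m), a j ^ 2 := by positivity
  have hs : 0 < Real.sqrt (1 + ∑ j ∈ Finset.univ.erase (Fin.last m), a j ^ 2) :=
    Real.sqrt_pos.2 hpos
  rw [cF_last, ← mul_assoc]
  rcases hε with h | h <;> rw [h] <;> simpa using hs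

lemma continuous_cF (m : ℕ) (ε : ℝ) : Continuous (cF m ε) := by
  refine continuous_pi fun i => ?_
  unfold cF
  by_cases h : i = Fin.last m
  · simp only [if_pos h]
    exact continuous_const.mul (Real.continuous_sqrt.comp
      (continuous_const.add (continuous_finset_sum _ fun j _ => (continuous_apply j).pow 2)))
  · simp only [if_neg h]
    exact continuous_apply i

lemma cF_fix (m : ℕ) {ε : ℝ} (hε : ε = 1 ∨ ε = -1) (a : Fin (m+1) → ℝ)
    (hsq : a (Fin.last m) ^ 2 = 1 + ∑ j ∈ Finset.univ.erase (Fin.last m), a j ^ 2)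
    (hsgn : 0 < ε * a (Fin.last m)) : cF m ε a = a := by
  funext i
  by_cases h : i = Fin.last m
  · subst h
    rw [cF_last, ← hsq, Real.sqrt_sq_eq_abs]
    rcases hε with h | h <;> subst h
    · rw [abs_of_pos (by linarith)]; ring
    · rw [abs_of_neg (by linarith)]; ring
  · exact cF_ne m ε a h

lemma isConnected_gset_preimage (ε : ℝ) (hε : ε = 1 ∨ ε = -1) :
    IsConnected (Subtype.val ⁻¹' gset p q ε : Set (einSet (bPair p q))) := by
  classical
  set G : PairV p q → PairV p q := fun u => (cF p 1 u.1, cF q ε u.2) with hGdef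
  have hGlast1 : ∀ u : PairV p q, 0 < (G u).1 (Fin.last p) := fun u => by
    have := cF_last_sign p (ε := 1) (Or.inl rfl) u.1
    simpa using this
  have hb0 : ∀ u, b0 p (G u).1 (G u).1 = 1 := fun u => by
    rw [b0_self, cF_last_sq p (Or.inl rfl), cF_sum_sq]; ring
  have hb1 : ∀ u, b1 q (G u).2 (G u).2 = -1 := fun u => by
    rw [b1_self, cF_last_sq q hε, cF_sum_sq]; ring
  have hsgn2 : ∀ u : PairV p q, 0 < ε * (G u).2 (Fin.last q) := fun u =>
    cF_last_sign q hε u.2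
  have hGne : ∀ u, G u ≠ 0 := by
    intro u hzero
    have h1 : (G u).1 (Fin.last p) = 0 := by rw [hzero]; rfl
    exact (hGlast1 u).ne' h1
  have hnull : ∀ u, Projectivization.mk ℝ (G u) (hGne u) ∈ einSet (bPair p q) := fun u =>
    mk_mem_einSet _ _ (by unfold bPair; rw [hb0, hb1]; ring)
  set H : PairV p q → einSet (bPair p q) :=
    fun u => ⟨Projectivization.mk ℝ (G u) (hGne u), hnull u⟩ with hHdef
  have hHcont : Continuous H := by
    apply Continuous.subtype_mk
    have h1 : Continuous G :=
      ((continuous_cF p 1).comp continuous_fst).prodMk ((continuous_cF q ε).comp continuous_snd)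
    have h2 : Continuous fun u => (⟨G u, hGne u⟩ : {v : PairV p q // v ≠ 0}) :=
      h1.subtype_mk _
    exact continuous_projMk.comp h2
  have hrange : H '' Set.univ = (Subtype.val ⁻¹' gset p q ε : Set (einSet (bPair p q))) := by
    apply Set.eq_of_subset_of_subset
    · rintro _ ⟨u, -, rfl⟩
      exact ⟨G u, hGne u, rfl, hb0 u, hGlast1 u, hb1 u, hsgn2 u⟩
    · rintro ⟨x, hx⟩ hmem
      obtain ⟨vw, h, hxe, c1, c2, c3, c4⟩ := hmem
      refine ⟨vw, Set.mem_univ _, ?_⟩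
      have hsq1 : vw.1 (Fin.last p) ^ 2
          = 1 + ∑ j ∈ Finset.univ.erase (Fin.last p), vw.1 j ^ 2 := by
        have := b0_self p vw.1; rw [c1] at this; linarith
      have hsq2 : vw.2 (Fin.last q) ^ 2
          = 1 + ∑ j ∈ Finset.univ.erase (Fin.last q), vw.2 j ^ 2 := by
        have := b1_self q vw.2; rw [c3] at this; linarith
      have hfix : G vw = vw := by
        have e1 : cF p 1 vw.1 = vw.1 := cF_fix p (Or.inl rfl) vw.1 hsq1 (by simpa using c2)
        have e2 : cF q ε vw.2 = vw.2 := cF_fix q hε vw.2 hsq2 c4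
        exact Prod.ext e1 e2
      apply Subtype.ext
      show Projectivization.mk ℝ (G vw) (hGne vw) = x
      have hxe' : x = Projectivization.mk ℝ vw h := hxe
      rw [hxe']
      exact (Projectivization.mk_eq_mk_iff' ℝ _ _ _ _).2 ⟨1, by rw [one_smul, hfix]⟩
  rw [← hrange]
  exact isConnected_univ.image H hHcont.continuousOn

end helperMore

section helperProper

variable {p q : ℕ}

/-- The probe vector `(e_p, -e_q)` whose lightcone misses the closed diamond. -/
def probeVec (p q : ℕ) : PairV p q :=
  (Pi.single (Fin.last p) 1, Pi.single (Fin.last q) (-1))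

lemma probe_ne : probeVec p q ≠ 0 := by
  intro h
  have h1 : (probeVec p q).1 (Fin.last p) = 0 := by rw [h]; rfl
  rw [show (probeVec p q).1 = Pi.single (Fin.last p) 1 from rfl, Pi.single_eq_same] at h1
  exact one_ne_zero h1

lemma bPair_probe (z : PairV p q) :
    bPair p q (probeVec p q) z = z.1 (Fin.last p) + z.2 (Fin.last q) := by
  have hfst : (probeVec p q).1 = Pi.single (Fin.last p) (1:ℝ) := rfl
  have hsnd : (probeVec p q).2 = Pi.single (Fin.last q) (-1:ℝ) := rfl
  unfold bPair
  rw [b0_cross, b1_cross, hfst, hsnd, Pi.single_eq_same, Pi.single_eq_same]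
  have h1 : ∑ i ∈ Finset.univ.erase (Fin.last p), (Pi.single (Fin.last p) 1 : Fin (p+1) → ℝ) i * z.1 i = 0 :=
    Finset.sum_eq_zero fun i hi => by
      rw [Pi.single_eq_of_ne (Finset.ne_of_mem_erase hi)]; ring
  have h2 : ∑ i ∈ Finset.univ.erase (Fin.last q), (Pi.single (Fin.last q) (-1) : Fin (q+1) → ℝ) i * z.2 i = 0 :=
    Finset.sum_eq_zero fun i hi => by
      rw [Pi.single_eq_of_ne (Finset.ne_of_mem_erase hi)]; ring
  rw [h1, h2]
  ring

lemma probe_null : bPair p q (probeVec p q) (probeVec p q) = 0 := by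
  rw [bPair_probe]
  have hfst : (probeVec p q).1 (Fin.last p) = 1 := Pi.single_eq_same _ _
  have hsnd : (probeVec p q).2 (Fin.last q) = -1 := Pi.single_eq_same _ _
  rw [hfst, hsnd]
  ring

lemma aux_neg_iff (a t : ℝ) (ha : a ≠ 0) : 0 > a * a * t ↔ 0 > t := by
  have h2 := mul_self_pos.2 ha
  constructor <;> intro h <;> nlinarith

lemma closure_diamond_subset :
    closure (diamond p q) ⊆ {x : ℙ ℝ (PairV p q) |
      0 ≤ b0 p x.rep.1 x.rep.1 ∧ 0 ≤ x.rep.1 (Fin.last p) * x.rep.2 (Fin.last q)} := by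
  apply closure_minimal
  · intro x hx
    have hx' : x ∈ gset p q 1 := by rw [gset_one]; exact hx
    obtain ⟨h1, h2⟩ := gset_rep_pos hx'
    rw [one_mul] at h2
    exact ⟨h1.le, h2.le⟩
  · rw [← isOpen_compl_iff]
    set Sc : Set (PairV p q) :=
      {u | b0 p u.1 u.1 < 0 ∨ u.1 (Fin.last p) * u.2 (Fin.last q) < 0} with hScdef
    have hSc : IsOpen Sc :=
      (isOpen_lt continuous_b0self continuous_const).union
        (isOpen_lt continuous_lastProd continuous_const)
    have hinv : ∀ (a : ℝ), a ≠ 0 → ∀ u : PairV p q, u ∈ Sc ↔ a • u ∈ Sc := by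
      intro a ha u
      have e1 : b0 p (a • u).1 (a • u).1 = a * a * b0 p u.1 u.1 := b0_smul p a a u.1 u.1
      have e2 : (a • u).1 (Fin.last p) * (a • u).2 (Fin.last q)
          = a * a * (u.1 (Fin.last p) * u.2 (Fin.last q)) := by
        show (a • u.1) (Fin.last p) * (a • u.2) (Fin.last q) = _
        simp only [Pi.smul_apply, smul_eq_mul]
        ring
      constructor
      · rintro (h | h)
        · exact Or.inl (by rw [e1]; exact (aux_neg_iff a _ ha).2 h)
        · exact Or.inr (by rw [e2]; exact (aux_neg_iff a _ ha).2 h)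
      · rintro (h | h)
        · rw [e1] at h; exact Or.inl ((aux_neg_iff a _ ha).1 h)
        · rw [e2] at h; exact Or.inr ((aux_neg_iff a _ ha).1 h)
    have hcompl : {x : ℙ ℝ (PairV p q) |
        0 ≤ b0 p x.rep.1 x.rep.1 ∧ 0 ≤ x.rep.1 (Fin.last p) * x.rep.2 (Fin.last q)}ᶜ
        = {x : ℙ ℝ (PairV p q) | x.rep ∈ Sc} := by
      ext x
      simp only [Set.mem_compl_iff, Set.mem_setOf_eq, not_and_or, not_le, hScdef]
    rw [hcompl]
    exact isOpen_repSet Sc hSc hinv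

lemma diamond_proper :
    ∃ y ∈ einSet (bPair p q), closure (diamond p q) ∩ lightcone (bPair p q) y = ∅ := by
  refine ⟨Projectivization.mk ℝ (probeVec p q) probe_ne,
    mk_mem_einSet _ _ probe_null, ?_⟩
  rw [Set.eq_empty_iff_forall_notMem]
  rintro x ⟨hxc, hlc⟩
  obtain ⟨hxein, hxB⟩ := hlc
  obtain ⟨a, ha, hrep⟩ := rep_eq_smul (probeVec p q) probe_ne
  rw [hrep] at hxB
  have hsmul : bPair p q (a • probeVec p q) x.rep = a * bPair p q (probeVec p q) x.rep := by
    have h := bPair_smul p q a 1 (probeVec p q) x.rep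
    rw [one_smul] at h
    rw [h]; ring
  rw [hsmul, bPair_probe] at hxB
  have hsum : x.rep.1 (Fin.last p) + x.rep.2 (Fin.last q) = 0 := by
    rcases mul_eq_zero.1 hxB with h | h
    · exact absurd h ha
    · exact h
  obtain ⟨hC1, hC2⟩ := closure_diamond_subset hxc
  have hs : x.rep.1 (Fin.last p) = 0 := by nlinarith
  have ht : x.rep.2 (Fin.last q) = 0 := by linarith
  have hb0e := b0_self p x.rep.1
  have hS1nn : (0:ℝ) ≤ ∑ i ∈ Finset.univ.erase (Fin.last p), x.rep.1 i ^ 2 :=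
    Finset.sum_nonneg fun i _ => sq_nonneg _
  have hS1 : ∑ i ∈ Finset.univ.erase (Fin.last p), x.rep.1 i ^ 2 = 0 := by
    rw [hs] at hb0e
    have : b0 p x.rep.1 x.rep.1 = -∑ i ∈ Finset.univ.erase (Fin.last p), x.rep.1 i ^ 2 := by
      rw [hb0e]; ring
    linarith [hC1, this ▸ hC1]
  have hnull : bPair p q x.rep x.rep = 0 := hxein
  have hb1e := b1_self q x.rep.2
  have hS2 : ∑ i ∈ Finset.univ.erase (Fin.last q), x.rep.2 i ^ 2 = 0 := by
    have hb0z : b0 p x.rep.1 x.rep.1 = 0 := by rw [hb0e, hs, hS1]; ring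
    have hb1z : b1 q x.rep.2 x.rep.2 = 0 := by
      have : b0 p x.rep.1 x.rep.1 + b1 q x.rep.2 x.rep.2 = 0 := hnull
      linarith
    rw [hb1e, ht] at hb1z
    linarith [hb1z]
  have h1 : x.rep.1 = 0 := by
    funext i
    by_cases h : i = Fin.last p
    · rw [h, hs]; rfl
    · have := (Finset.sum_eq_zero_iff_of_nonneg fun j _ => sq_nonneg (x.rep.1 j)).1 hS1 i
        (Finset.mem_erase.2 ⟨h, Finset.mem_univ i⟩)
      have := sq_eq_zero_iff.1 this
      rw [this]; rfl
  have h2 : x.rep.2 = 0 := by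
    funext i
    by_cases h : i = Fin.last q
    · rw [h, ht]; rfl
    · have := (Finset.sum_eq_zero_iff_of_nonneg fun j _ => sq_nonneg (x.rep.2 j)).1 hS2 i
        (Finset.mem_erase.2 ⟨h, Finset.mem_univ i⟩)
      have := sq_eq_zero_iff.1 this
      rw [this]; rfl
  exact x.rep_nonzero (Prod.ext h1 h2)

end helperProper

/-- The model diamond and its dual are domains; they are "dual" to each
other; and the model diamond is a proper domain. -/
theorem stmt_1 (p q : ℕ) (hp : 1 ≤ p) (hq : 1 ≤ q) :
    (diamond p q ⊆ einSet (bPair p q)) ∧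
    (diamondDual p q ⊆ einSet (bPair p q)) ∧
    IsOpen (Subtype.val ⁻¹' diamond p q : Set (einSet (bPair p q))) ∧
    IsConnected (Subtype.val ⁻¹' diamond p q : Set (einSet (bPair p q))) ∧
    IsOpen (Subtype.val ⁻¹' diamondDual p q : Set (einSet (bPair p q))) ∧
    IsConnected (Subtype.val ⁻¹' diamondDual p q : Set (einSet (bPair p q))) ∧
    (∀ x ∈ diamond p q, ∀ y ∈ diamondDual p q,
      (∀ (u u' : PairV p q) (hu : u ≠ 0) (hu' : u' ≠ 0),
        Projectivization.mk ℝ u hu = x → Projectivization.mk ℝ u' hu' = y →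
          bPair p q u u' ≠ 0) ∧ x ∉ lightcone (bPair p q) y) ∧
    ∃ y ∈ einSet (bPair p q), closure (diamond p q) ∩ lightcone (bPair p q) y = ∅ := by
  have hd1 : diamond p q = gset p q 1 := (gset_one p q).symm
  have hd2 : diamondDual p q = gset p q (-1) := (gset_neg p q).symm
  refine ⟨?_, ?_, ?_, ?_, ?_, ?_, ?_, ?_⟩
  · rw [hd1]; exact gset_subset_einSet 1
  · rw [hd2]; exact gset_subset_einSet (-1)
  · rw [hd1]; exact isOpen_gset_preimage 1 (Or.inl rfl)
  · rw [hd1]; exact isConnected_gset_preimage 1 (Or.inl rfl)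
  · rw [hd2]; exact isOpen_gset_preimage (-1) (Or.inr rfl)
  · rw [hd2]; exact isConnected_gset_preimage (-1) (Or.inr rfl)
  · intro x hx y hy
    obtain ⟨vw, h, hxe, c1, c2, c3, c4⟩ := hx
    obtain ⟨vw', h', hye, c1', c2', c3', c4'⟩ := hy
    have hpos : 0 < bPair p q vw vw' := cross_pos p q vw vw' c1 c2 c3 c4 c1' c2' c3' c4'
    have key : ∀ (u u' : PairV p q) (hu : u ≠ 0) (hu' : u' ≠ 0),
        Projectivization.mk ℝ u hu = x → Projectivization.mk ℝ u' hu' = y →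
          bPair p q u u' ≠ 0 := by
      intro u u' hu hu' hxu hyu'
      rw [hxe] at hxu
      rw [hye] at hyu'
      obtain ⟨a, ha⟩ := (Projectivization.mk_eq_mk_iff ℝ _ _ hu h).1 hxu
      obtain ⟨a', ha'⟩ := (Projectivization.mk_eq_mk_iff ℝ _ _ hu' h').1 hyu'
      rw [← ha, ← ha', Units.smul_def, Units.smul_def, bPair_smul]
      exact mul_ne_zero (mul_ne_zero a.ne_zero a'.ne_zero) hpos.ne'
    refine ⟨key, ?_⟩
    rintro ⟨hein, hB⟩
    have hx' := key x.rep y.rep x.rep_nonzero y.rep_nonzero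
      (Projectivization.mk_rep x) (Projectivization.mk_rep y)
    exact hx' (by rw [bPair_comm]; exact hB)
  · exact diamond_proper
end
end

section
/- Let p, q ≥ 1 and let ℝⁿ = V₀ ⊕ V₁ be a B-orthogonal direct sum decomposition such that the restriction of B to V₀ is nondegenerate of signature (p₀, q₀) and the restriction of B to V₁ is nondegenerate of signature (p₁, q₁), with p₀, q₀, p₁, q₁ ≥ 1 (so p₀ + p₁ = p + 1 and q₀ + q₁ = q + 1). Let S = {(v₀, v₁) ∈ V₀ × V₁ : Q(v₀) = −1 and Q(v₁) = 1}, with its subspace topology, and let U₀ = {x ∈ Ein^{p,q} : x has a representative v₀ + v₁ with v₀ ∈ V₀, v₁ ∈ V₁, Q(v₀) = −1, Q(v₁) = 1}. Then the map π : S → U₀ defined by π(v₀, v₁) = span(v₀ + v₁) is a covering map, and every fiber of π has exactly two elements: π⁻¹(π(v₀, v₁)) = {(v₀, v₁), (−v₀, −v₁)}. -/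
noncomputable section

open scoped LinearAlgebra.Projectivization ENNReal
open Projectivization Filter Topology Set

variable {W : Type} [AddCommGroup W] [Module ℝ W] [TopologicalSpace W]

/-- The restriction of `B` to a subspace is nondegenerate of signature `(r, s)`:
some basis diagonalizes it with `r` coefficients `−1` and `s` coefficients `+1`. -/
def HasSignature (p q : ℕ) (V : Submodule ℝ (Fin (p + q + 2) → ℝ)) (r s : ℕ) : Prop :=
  ∃ bas : Module.Basis (Fin (r + s)) ℝ V,
    ∀ i j : Fin (r + s),
      bForm p q (bas i : Fin (p + q + 2) → ℝ) (bas j : Fin (p + q + 2) → ℝ) =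
        if i = j then (if (i : ℕ) < r then -1 else 1) else 0

/-- The set `S = {(v₀, v₁) ∈ V₀ × V₁ : Q(v₀) = −1, Q(v₁) = 1}` with its subspace
topology. -/
abbrev sheetPair (p q : ℕ) (V₀ V₁ : Submodule ℝ (Fin (p + q + 2) → ℝ)) :=
  {vw : (Fin (p + q + 2) → ℝ) × (Fin (p + q + 2) → ℝ) //
    vw.1 ∈ V₀ ∧ vw.2 ∈ V₁ ∧ bForm p q vw.1 vw.1 = -1 ∧ bForm p q vw.2 vw.2 = 1}

/-- The open set `U₀` of points spanned by `v₀ + v₁` with `Q(v₀) = −1`, `Q(v₁) = 1`. -/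
def U0 (p q : ℕ) (V₀ V₁ : Submodule ℝ (Fin (p + q + 2) → ℝ)) :
    Set (ℙ ℝ (Fin (p + q + 2) → ℝ)) :=
  {x | ∃ v₀ ∈ V₀, ∃ v₁ ∈ V₁, ∃ h : v₀ + v₁ ≠ 0,
    x = Projectivization.mk ℝ (v₀ + v₁) h ∧
    bForm p q v₀ v₀ = -1 ∧ bForm p q v₁ v₁ = 1}


/-! ### Auxiliary material for `stmt_2` -/

section Stmt2Aux

lemma bForm_smul_left (p q : ℕ) (a : ℝ) (v w : Fin (p + q + 2) → ℝ) :
    bForm p q (a • v) w = a * bForm p q v w := by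
  simp only [bForm, Pi.smul_apply, smul_eq_mul, Finset.mul_sum]
  exact Finset.sum_congr rfl fun i _ => by ring

lemma bForm_comm (p q : ℕ) (v w : Fin (p + q + 2) → ℝ) :
    bForm p q v w = bForm p q w v :=
  Finset.sum_congr rfl fun i _ => by ring

lemma bForm_smul_right (p q : ℕ) (a : ℝ) (v w : Fin (p + q + 2) → ℝ) :
    bForm p q v (a • w) = a * bForm p q v w := by
  rw [bForm_comm, bForm_smul_left, bForm_comm]

lemma bForm_add_left (p q : ℕ) (u v w : Fin (p + q + 2) → ℝ) :
    bForm p q (u + v) w = bForm p q u w + bForm p q v w := by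
  simp only [bForm, Pi.add_apply, ← Finset.sum_add_distrib]
  exact Finset.sum_congr rfl fun i _ => by ring

lemma bForm_add_right (p q : ℕ) (u v w : Fin (p + q + 2) → ℝ) :
    bForm p q u (v + w) = bForm p q u v + bForm p q u w := by
  rw [bForm_comm, bForm_add_left, bForm_comm p q u v, bForm_comm p q u w]

lemma bForm_neg_neg (p q : ℕ) (v w : Fin (p + q + 2) → ℝ) :
    bForm p q (-v) (-w) = bForm p q v w :=
  Finset.sum_congr rfl fun i _ => by simp only [Pi.neg_apply]; ring

lemma continuous_bForm (p q : ℕ) :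
    Continuous fun vw : (Fin (p + q + 2) → ℝ) × (Fin (p + q + 2) → ℝ) =>
      bForm p q vw.1 vw.2 := by
  unfold bForm
  exact continuous_finset_sum _ fun i _ =>
    (continuous_const.mul ((continuous_apply i).comp continuous_fst)).mul
      ((continuous_apply i).comp continuous_snd)

variable {W : Type} [AddCommGroup W] [Module ℝ W] [TopologicalSpace W]

/-- The canonical quotient map from nonzero vectors to projective space. -/
def mkQ : {v : W // v ≠ 0} → ℙ ℝ W := fun v => Projectivization.mk ℝ v v.2

lemma isQuotientMap_mkQ : IsQuotientMap (mkQ (W := W)) :=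
  isQuotientMap_quotient_mk'

lemma surjective_mkQ : Function.Surjective (mkQ (W := W)) :=
  isQuotientMap_mkQ.surjective

lemma isOpenMap_mkQ [ContinuousSMul ℝ W] : IsOpenMap (mkQ (W := W)) := by
  intro U hU
  rw [← isQuotientMap_mkQ.isOpen_preimage]
  have : mkQ ⁻¹' (mkQ '' U) =
      ⋃ c : ℝˣ, (fun v : {v : W // v ≠ 0} =>
        (⟨(c : ℝ) • (v : W), smul_ne_zero c.ne_zero v.2⟩ : {v : W // v ≠ 0})) ⁻¹' U := by
    ext v
    simp only [Set.mem_preimage, Set.mem_image, Set.mem_iUnion]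
    constructor
    · rintro ⟨u, hu, huv⟩
      obtain ⟨c, hc⟩ := (Projectivization.mk_eq_mk_iff ℝ _ _ u.2 v.2).1 huv
      exact ⟨c, by rwa [show (⟨(c:ℝ) • (v:W), _⟩ : {v : W // v ≠ 0}) = u from Subtype.ext hc]⟩
    · rintro ⟨c, hc⟩
      refine ⟨_, hc, ?_⟩
      exact (Projectivization.mk_eq_mk_iff ℝ _ _ _ v.2).2 ⟨c, rfl⟩
  rw [this]
  refine isOpen_iUnion fun c => ?_
  exact hU.preimage (by fun_prop)

lemma exists_rep_eq (x : ℙ ℝ W) (v : W) (hv : v ≠ 0) (hx : x = Projectivization.mk ℝ v hv) :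
    ∃ a : ℝ, a ≠ 0 ∧ x.rep = a • v := by
  obtain ⟨a, ha⟩ := Projectivization.exists_smul_eq_mk_rep ℝ v hv
  exact ⟨a, a.ne_zero, by rw [hx, ← ha, Units.smul_def]⟩

lemma isOpen_invariant (P : W → Prop) (hP : IsOpen {v : W | P v})
    (hinv : ∀ (c : ℝ), c ≠ 0 → ∀ v, P v → P (c • v)) :
    IsOpen {x : ℙ ℝ W | P x.rep} := by
  rw [← isQuotientMap_mkQ.isOpen_preimage]
  have hpre : mkQ ⁻¹' {x : ℙ ℝ W | P x.rep} = {v : {v : W // v ≠ 0} | P v} := by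
    ext v
    obtain ⟨a, ha, hrep⟩ := exists_rep_eq (mkQ v) v v.2 rfl
    simp only [Set.mem_preimage, Set.mem_setOf_eq, hrep]
    constructor
    · intro h
      have h2 := hinv a⁻¹ (inv_ne_zero ha) _ h
      rwa [smul_smul, inv_mul_cancel₀ ha, one_smul] at h2
    · exact fun h => hinv a ha _ h
  rw [hpre]
  exact hP.preimage continuous_subtype_val

section Concrete

variable (p q : ℕ) (V₀ V₁ : Submodule ℝ (Fin (p + q + 2) → ℝ))

/-- Projection onto `V₀` along `V₁`, as an endomorphism. -/
def pr0 (hcompl : IsCompl V₀ V₁) : (Fin (p+q+2) → ℝ) →ₗ[ℝ] (Fin (p+q+2) → ℝ) :=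
  V₀.subtype ∘ₗ V₀.linearProjOfIsCompl V₁ hcompl

/-- Projection onto `V₁` along `V₀`, as an endomorphism. -/
def pr1 (hcompl : IsCompl V₀ V₁) : (Fin (p+q+2) → ℝ) →ₗ[ℝ] (Fin (p+q+2) → ℝ) :=
  V₁.subtype ∘ₗ V₁.linearProjOfIsCompl V₀ hcompl.symm

lemma pr0_mem (hcompl : IsCompl V₀ V₁) (w : Fin (p+q+2) → ℝ) : pr0 p q V₀ V₁ hcompl w ∈ V₀ := Submodule.coe_mem _

lemma pr1_mem (hcompl : IsCompl V₀ V₁) (w : Fin (p+q+2) → ℝ) : pr1 p q V₀ V₁ hcompl w ∈ V₁ := Submodule.coe_mem _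

lemma pr0_add_pr1 (hcompl : IsCompl V₀ V₁) (w : Fin (p+q+2) → ℝ) :
    pr0 p q V₀ V₁ hcompl w + pr1 p q V₀ V₁ hcompl w = w :=
  Submodule.projection_add_projection_eq_self hcompl w

lemma pr0_apply (hcompl : IsCompl V₀ V₁) {v₀ v₁ : Fin (p+q+2) → ℝ} (h₀ : v₀ ∈ V₀) (h₁ : v₁ ∈ V₁) :
    pr0 p q V₀ V₁ hcompl (v₀ + v₁) = v₀ := by
  have e1 : V₀.linearProjOfIsCompl V₁ hcompl v₀ = ⟨v₀, h₀⟩ :=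
    Submodule.linearProjOfIsCompl_apply_left hcompl ⟨v₀, h₀⟩
  have e2 : V₀.linearProjOfIsCompl V₁ hcompl v₁ = 0 :=
    Submodule.linearProjOfIsCompl_apply_right hcompl ⟨v₁, h₁⟩
  simp [pr0, map_add, e1, e2]

lemma pr1_apply (hcompl : IsCompl V₀ V₁) {v₀ v₁ : Fin (p+q+2) → ℝ} (h₀ : v₀ ∈ V₀) (h₁ : v₁ ∈ V₁) :
    pr1 p q V₀ V₁ hcompl (v₀ + v₁) = v₁ := by
  have e1 : V₁.linearProjOfIsCompl V₀ hcompl.symm v₁ = ⟨v₁, h₁⟩ :=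
    Submodule.linearProjOfIsCompl_apply_left hcompl.symm ⟨v₁, h₁⟩
  have e2 : V₁.linearProjOfIsCompl V₀ hcompl.symm v₀ = 0 :=
    Submodule.linearProjOfIsCompl_apply_right hcompl.symm ⟨v₀, h₀⟩
  simp [pr1, map_add, e1, e2]

lemma sheet_sum_ne_zero (hcompl : IsCompl V₀ V₁) (s : sheetPair p q V₀ V₁) : s.1.1 + s.1.2 ≠ 0 := by
  intro h
  have h0 : pr0 p q V₀ V₁ hcompl (s.1.1 + s.1.2) = s.1.1 :=
    pr0_apply p q V₀ V₁ hcompl s.2.1 s.2.2.1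
  rw [h, map_zero] at h0
  have hB := s.2.2.2.1
  rw [← h0] at hB
  simp [bForm] at hB

/-- The canonical projection `S → U₀`. -/
def piCan (hcompl : IsCompl V₀ V₁) (s : sheetPair p q V₀ V₁) : U0 p q V₀ V₁ :=
  ⟨Projectivization.mk ℝ (s.1.1 + s.1.2) (sheet_sum_ne_zero p q V₀ V₁ hcompl s),
   ⟨s.1.1, s.2.1, s.1.2, s.2.2.1, sheet_sum_ne_zero p q V₀ V₁ hcompl s, rfl,
    s.2.2.2.1, s.2.2.2.2⟩⟩

lemma piCan_submodule (hcompl : IsCompl V₀ V₁) (s : sheetPair p q V₀ V₁) :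
    (piCan p q V₀ V₁ hcompl s : ℙ ℝ (Fin (p+q+2) → ℝ)).submodule =
      Submodule.span ℝ {s.1.1 + s.1.2} :=
  Projectivization.submodule_mk _ _

lemma pi_eq (hcompl : IsCompl V₀ V₁) (π : sheetPair p q V₀ V₁ → U0 p q V₀ V₁)
    (hπ : ∀ s : sheetPair p q V₀ V₁,
      (π s : ℙ ℝ (Fin (p + q + 2) → ℝ)).submodule = Submodule.span ℝ {s.1.1 + s.1.2}) :
    π = piCan p q V₀ V₁ hcompl := by
  funext s
  apply Subtype.ext
  apply Projectivization.submodule_injective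
  rw [hπ s, piCan_submodule]

lemma piCan_eq_iff (hcompl : IsCompl V₀ V₁) (s t : sheetPair p q V₀ V₁) :
    piCan p q V₀ V₁ hcompl t = piCan p q V₀ V₁ hcompl s ↔ (t.1 = s.1 ∨ t.1 = -s.1) := by
  constructor
  · intro h
    have h' := congrArg Subtype.val h
    simp only [piCan] at h'
    rw [Projectivization.mk_eq_mk_iff] at h'
    obtain ⟨a, ha⟩ := h'
    rw [Units.smul_def] at ha
    have h0 : (a : ℝ) • s.1.1 = t.1.1 := by
      have := congrArg (pr0 p q V₀ V₁ hcompl) ha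
      rwa [map_smul, pr0_apply p q V₀ V₁ hcompl s.2.1 s.2.2.1,
        pr0_apply p q V₀ V₁ hcompl t.2.1 t.2.2.1] at this
    have h1 : (a : ℝ) • s.1.2 = t.1.2 := by
      have := congrArg (pr1 p q V₀ V₁ hcompl) ha
      rwa [map_smul, pr1_apply p q V₀ V₁ hcompl s.2.1 s.2.2.1,
        pr1_apply p q V₀ V₁ hcompl t.2.1 t.2.2.1] at this
    have ha2 : (a : ℝ) * (a : ℝ) = 1 := by
      have hB := t.2.2.2.2
      rw [← h1, bForm_smul_left, bForm_smul_right, s.2.2.2.2] at hB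
      linarith [hB]
    rcases mul_self_eq_one_iff.1 ha2 with h1' | h1'
    · left
      rw [Prod.ext_iff]
      constructor
      · rw [← h0, h1', one_smul]
      · rw [← h1, h1', one_smul]
    · right
      rw [Prod.ext_iff]
      constructor
      · rw [← h0, h1', Prod.fst_neg]; simp
      · rw [← h1, h1', Prod.snd_neg]; simp
  · intro h
    apply Subtype.ext
    simp only [piCan]
    rw [Projectivization.mk_eq_mk_iff']
    rcases h with h | h
    · exact ⟨1, by rw [one_smul, h]⟩
    · refine ⟨-1, ?_⟩
      rw [h]
      show (-1 : ℝ) • _ = (-s.1).1 + (-s.1).2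
      simp [neg_add]

lemma u0_rep_facts (hcompl : IsCompl V₀ V₁) {w : Fin (p+q+2) → ℝ} (hw : w ≠ 0)
    (hU : Projectivization.mk ℝ w hw ∈ U0 p q V₀ V₁) :
    bForm p q (pr0 p q V₀ V₁ hcompl w) (pr0 p q V₀ V₁ hcompl w) < 0 ∧
    bForm p q (pr1 p q V₀ V₁ hcompl w) (pr1 p q V₀ V₁ hcompl w) =
      -(bForm p q (pr0 p q V₀ V₁ hcompl w) (pr0 p q V₀ V₁ hcompl w)) := by
  obtain ⟨v₀, h₀, v₁, h₁, hne, heq, hQ0, hQ1⟩ := hU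
  obtain ⟨a, ha⟩ := (Projectivization.mk_eq_mk_iff ℝ _ _ hw hne).1 heq
  rw [Units.smul_def] at ha
  have e0 : pr0 p q V₀ V₁ hcompl w = (a : ℝ) • v₀ := by
    rw [← ha, map_smul, pr0_apply p q V₀ V₁ hcompl h₀ h₁]
  have e1 : pr1 p q V₀ V₁ hcompl w = (a : ℝ) • v₁ := by
    rw [← ha, map_smul, pr1_apply p q V₀ V₁ hcompl h₀ h₁]
  rw [e0, e1, bForm_smul_left, bForm_smul_right, bForm_smul_left, bForm_smul_right, hQ0, hQ1]
  have hane : (a : ℝ) ≠ 0 := a.ne_zero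
  have hpos : 0 < (a : ℝ) * (a : ℝ) := mul_self_pos.2 hane
  constructor
  · nlinarith
  · ring

end Concrete

section Phi

variable (p q : ℕ) (V₀ V₁ : Submodule ℝ (Fin (p + q + 2) → ℝ))

/-- The normalizing coefficient. -/
def coefφ (hcompl : IsCompl V₀ V₁) (φ : (Fin (p + q + 2) → ℝ) →ₗ[ℝ] ℝ)
    (w : Fin (p + q + 2) → ℝ) : ℝ :=
  φ w / (|φ w| *
    Real.sqrt (-(bForm p q (pr0 p q V₀ V₁ hcompl w) (pr0 p q V₀ V₁ hcompl w))))

variable (hcompl : IsCompl V₀ V₁) (φ : (Fin (p + q + 2) → ℝ) →ₗ[ℝ] ℝ)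

lemma coef_ne_zero {w : Fin (p + q + 2) → ℝ} (hφ : φ w ≠ 0)
    (hQ : bForm p q (pr0 p q V₀ V₁ hcompl w) (pr0 p q V₀ V₁ hcompl w) < 0) :
    coefφ p q V₀ V₁ hcompl φ w ≠ 0 :=
  div_ne_zero hφ (mul_ne_zero (abs_ne_zero.2 hφ)
    (ne_of_gt (Real.sqrt_pos.2 (by linarith))))

lemma coef_mul_self {w : Fin (p + q + 2) → ℝ} (hφ : φ w ≠ 0)
    (hQ : bForm p q (pr0 p q V₀ V₁ hcompl w) (pr0 p q V₀ V₁ hcompl w) < 0) :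
    coefφ p q V₀ V₁ hcompl φ w * coefφ p q V₀ V₁ hcompl φ w =
      (-(bForm p q (pr0 p q V₀ V₁ hcompl w) (pr0 p q V₀ V₁ hcompl w)))⁻¹ := by
  set Q := bForm p q (pr0 p q V₀ V₁ hcompl w) (pr0 p q V₀ V₁ hcompl w) with hQdef
  have hs : Real.sqrt (-Q) * Real.sqrt (-Q) = -Q := Real.mul_self_sqrt (by linarith)
  have hspos : 0 < Real.sqrt (-Q) := Real.sqrt_pos.2 (by linarith)
  have hb : |φ w| * |φ w| = φ w * φ w := abs_mul_abs_self _
  have habs : |φ w| ≠ 0 := abs_ne_zero.2 hφ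
  unfold coefφ
  rw [← hQdef, div_mul_div_comm]
  rw [show |φ w| * Real.sqrt (-Q) * (|φ w| * Real.sqrt (-Q)) =
      |φ w| * |φ w| * (Real.sqrt (-Q) * Real.sqrt (-Q)) by ring, hb, hs]
  rw [div_mul_cancel_left₀ (mul_ne_zero hφ hφ)]

lemma coef_smul {w : Fin (p + q + 2) → ℝ} (hφ : φ w ≠ 0)
    (hQ : bForm p q (pr0 p q V₀ V₁ hcompl w) (pr0 p q V₀ V₁ hcompl w) < 0)
    {a : ℝ} (ha : a ≠ 0) :
    coefφ p q V₀ V₁ hcompl φ (a • w) = a⁻¹ * coefφ p q V₀ V₁ hcompl φ w := by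
  set Q := bForm p q (pr0 p q V₀ V₁ hcompl w) (pr0 p q V₀ V₁ hcompl w) with hQdef
  have hQs : bForm p q (pr0 p q V₀ V₁ hcompl (a • w)) (pr0 p q V₀ V₁ hcompl (a • w)) =
      a ^ 2 * Q := by
    rw [map_smul, bForm_smul_left, bForm_smul_right, ← hQdef]; ring
  have hsq : Real.sqrt (-(a ^ 2 * Q)) = |a| * Real.sqrt (-Q) := by
    rw [show -(a ^ 2 * Q) = a ^ 2 * (-Q) by ring, Real.sqrt_mul (sq_nonneg a),
      Real.sqrt_sq_eq_abs]
  have hs : Real.sqrt (-Q) * Real.sqrt (-Q) = -Q := Real.mul_self_sqrt (by linarith)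
  have hspos : 0 < Real.sqrt (-Q) := Real.sqrt_pos.2 (by linarith)
  have habs2 : |a| * |a| = a * a := abs_mul_abs_self a
  unfold coefφ
  rw [map_smul, smul_eq_mul, hQs, hsq, abs_mul]
  rw [abs_mul_abs_self] at habs2
  field_simp
  ring_nf
  rw [sq_abs]
  ring
  rw [← hQdef]
  field_simp [hspos.ne']

/-- The normalized pair of components. -/
def sigmaVec (w : Fin (p + q + 2) → ℝ) :
    (Fin (p + q + 2) → ℝ) × (Fin (p + q + 2) → ℝ) :=
  (coefφ p q V₀ V₁ hcompl φ w • pr0 p q V₀ V₁ hcompl w,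
   coefφ p q V₀ V₁ hcompl φ w • pr1 p q V₀ V₁ hcompl w)

lemma sigmaVec_sum (w : Fin (p + q + 2) → ℝ) :
    (sigmaVec p q V₀ V₁ hcompl φ w).1 + (sigmaVec p q V₀ V₁ hcompl φ w).2 =
      coefφ p q V₀ V₁ hcompl φ w • w := by
  rw [show (sigmaVec p q V₀ V₁ hcompl φ w).1 + (sigmaVec p q V₀ V₁ hcompl φ w).2 =
    coefφ p q V₀ V₁ hcompl φ w •
      (pr0 p q V₀ V₁ hcompl w + pr1 p q V₀ V₁ hcompl w) from (smul_add _ _ _).symm,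
    pr0_add_pr1]

lemma sigmaVec_mem {w : Fin (p + q + 2) → ℝ} (hφ : φ w ≠ 0)
    (hQ : bForm p q (pr0 p q V₀ V₁ hcompl w) (pr0 p q V₀ V₁ hcompl w) < 0)
    (hQ1 : bForm p q (pr1 p q V₀ V₁ hcompl w) (pr1 p q V₀ V₁ hcompl w) =
      -(bForm p q (pr0 p q V₀ V₁ hcompl w) (pr0 p q V₀ V₁ hcompl w))) :
    (sigmaVec p q V₀ V₁ hcompl φ w).1 ∈ V₀ ∧ (sigmaVec p q V₀ V₁ hcompl φ w).2 ∈ V₁ ∧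
    bForm p q (sigmaVec p q V₀ V₁ hcompl φ w).1 (sigmaVec p q V₀ V₁ hcompl φ w).1 = -1 ∧
    bForm p q (sigmaVec p q V₀ V₁ hcompl φ w).2 (sigmaVec p q V₀ V₁ hcompl φ w).2 = 1 := by
  set Q := bForm p q (pr0 p q V₀ V₁ hcompl w) (pr0 p q V₀ V₁ hcompl w) with hQdef
  have hc2 := coef_mul_self p q V₀ V₁ hcompl φ hφ hQ
  have hQne : Q ≠ 0 := ne_of_lt hQ
  refine ⟨V₀.smul_mem _ (pr0_mem p q V₀ V₁ hcompl w),
    V₁.smul_mem _ (pr1_mem p q V₀ V₁ hcompl w), ?_, ?_⟩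
  · show bForm p q (_ • pr0 p q V₀ V₁ hcompl w) (_ • pr0 p q V₀ V₁ hcompl w) = -1
    rw [bForm_smul_left, bForm_smul_right, ← mul_assoc, hc2, ← hQdef]
    field_simp
  · show bForm p q (_ • pr1 p q V₀ V₁ hcompl w) (_ • pr1 p q V₀ V₁ hcompl w) = 1
    rw [bForm_smul_left, bForm_smul_right, ← mul_assoc, hc2, hQ1, ← hQdef]
    field_simp

lemma sigmaVec_smul {w : Fin (p + q + 2) → ℝ} (hφ : φ w ≠ 0)
    (hQ : bForm p q (pr0 p q V₀ V₁ hcompl w) (pr0 p q V₀ V₁ hcompl w) < 0)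
    {a : ℝ} (ha : a ≠ 0) :
    sigmaVec p q V₀ V₁ hcompl φ (a • w) = sigmaVec p q V₀ V₁ hcompl φ w := by
  unfold sigmaVec
  rw [coef_smul p q V₀ V₁ hcompl φ hφ hQ ha, map_smul, map_smul, smul_smul, smul_smul,
    show a⁻¹ * coefφ p q V₀ V₁ hcompl φ w * a = coefφ p q V₀ V₁ hcompl φ w by
      rw [mul_comm, ← mul_assoc, mul_inv_cancel₀ ha, one_mul]]

lemma phi_sigmaVec_pos {w : Fin (p + q + 2) → ℝ} (hφ : φ w ≠ 0)
    (hQ : bForm p q (pr0 p q V₀ V₁ hcompl w) (pr0 p q V₀ V₁ hcompl w) < 0) :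
    0 < φ ((sigmaVec p q V₀ V₁ hcompl φ w).1 + (sigmaVec p q V₀ V₁ hcompl φ w).2) := by
  rw [sigmaVec_sum, map_smul, smul_eq_mul]
  unfold coefφ
  rw [div_mul_eq_mul_div]
  apply div_pos
  · exact mul_self_pos.2 hφ
  · exact mul_pos (abs_pos.2 hφ) (Real.sqrt_pos.2 (by linarith))

end Phi

section SigmaSec

variable (p q : ℕ) (V₀ V₁ : Submodule ℝ (Fin (p + q + 2) → ℝ))

/-- The chart region determined by a linear functional `φ`. -/
def Aset (φ : (Fin (p + q + 2) → ℝ) →ₗ[ℝ] ℝ) : Set (ℙ ℝ (Fin (p + q + 2) → ℝ)) :=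
  {x | x ∈ U0 p q V₀ V₁ ∧ φ x.rep ≠ 0}

variable (hcompl : IsCompl V₀ V₁) (φ : (Fin (p + q + 2) → ℝ) →ₗ[ℝ] ℝ)

lemma rep_facts {x : ℙ ℝ (Fin (p + q + 2) → ℝ)} (hx : x ∈ Aset p q V₀ V₁ φ) :
    φ x.rep ≠ 0 ∧
    bForm p q (pr0 p q V₀ V₁ hcompl x.rep) (pr0 p q V₀ V₁ hcompl x.rep) < 0 ∧
    bForm p q (pr1 p q V₀ V₁ hcompl x.rep) (pr1 p q V₀ V₁ hcompl x.rep) =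
      -(bForm p q (pr0 p q V₀ V₁ hcompl x.rep) (pr0 p q V₀ V₁ hcompl x.rep)) := by
  refine ⟨hx.2, ?_⟩
  have hU : Projectivization.mk ℝ x.rep (Projectivization.rep_nonzero x) ∈ U0 p q V₀ V₁ := by
    rw [Projectivization.mk_rep]; exact hx.1
  exact u0_rep_facts p q V₀ V₁ hcompl (Projectivization.rep_nonzero x) hU

/-- The canonical continuous section over `Aset`. -/
def sigmaSec (y : {x : ℙ ℝ (Fin (p + q + 2) → ℝ) // x ∈ Aset p q V₀ V₁ φ}) :
    sheetPair p q V₀ V₁ :=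
  ⟨sigmaVec p q V₀ V₁ hcompl φ (y : ℙ ℝ (Fin (p + q + 2) → ℝ)).rep, by
    obtain ⟨hφ, hQ, hQ1⟩ := rep_facts p q V₀ V₁ hcompl φ y.2
    exact sigmaVec_mem p q V₀ V₁ hcompl φ hφ hQ hQ1⟩

lemma mkQ_mem_facts {v : {v : Fin (p + q + 2) → ℝ // v ≠ 0}}
    (hv : mkQ v ∈ Aset p q V₀ V₁ φ) :
    φ (v : Fin (p + q + 2) → ℝ) ≠ 0 ∧
    bForm p q (pr0 p q V₀ V₁ hcompl (v : Fin (p + q + 2) → ℝ))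
      (pr0 p q V₀ V₁ hcompl (v : Fin (p + q + 2) → ℝ)) < 0 ∧
    bForm p q (pr1 p q V₀ V₁ hcompl (v : Fin (p + q + 2) → ℝ))
      (pr1 p q V₀ V₁ hcompl (v : Fin (p + q + 2) → ℝ)) =
      -(bForm p q (pr0 p q V₀ V₁ hcompl (v : Fin (p + q + 2) → ℝ))
        (pr0 p q V₀ V₁ hcompl (v : Fin (p + q + 2) → ℝ))) := by
  obtain ⟨a, ha, hrep⟩ := exists_rep_eq (mkQ v) v v.2 rfl
  obtain ⟨hφr, hQr, hQ1r⟩ := rep_facts p q V₀ V₁ hcompl φ hv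
  have hfacts := u0_rep_facts p q V₀ V₁ hcompl v.2 hv.1
  refine ⟨?_, hfacts.1, hfacts.2⟩
  intro h0
  apply hφr
  rw [hrep, map_smul, smul_eq_mul, h0, mul_zero]

lemma sigmaSec_rep_eq {v : {v : Fin (p + q + 2) → ℝ // v ≠ 0}}
    (hv : mkQ v ∈ Aset p q V₀ V₁ φ) :
    (sigmaSec p q V₀ V₁ hcompl φ ⟨mkQ v, hv⟩).1 =
      sigmaVec p q V₀ V₁ hcompl φ (v : Fin (p + q + 2) → ℝ) := by
  obtain ⟨hφv, hQv, _⟩ := mkQ_mem_facts p q V₀ V₁ hcompl φ hv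
  obtain ⟨a, ha, hrep⟩ := exists_rep_eq (mkQ v) v v.2 rfl
  show sigmaVec p q V₀ V₁ hcompl φ (mkQ v).rep = _
  rw [hrep, sigmaVec_smul p q V₀ V₁ hcompl φ hφv hQv ha]

lemma continuous_sigmaSec : Continuous (sigmaSec p q V₀ V₁ hcompl φ) := by
  have hq : IsQuotientMap ((Aset p q V₀ V₁ φ).restrictPreimage mkQ) :=
    ((isOpenMap_mkQ.restrictPreimage _).isQuotientMap
      (isQuotientMap_mkQ.continuous.restrictPreimage)
      (surjective_mkQ.restrictPreimage _))
  rw [hq.continuous_iff]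
  have heq : (sigmaSec p q V₀ V₁ hcompl φ) ∘ ((Aset p q V₀ V₁ φ).restrictPreimage mkQ) =
      fun v : {v : {v : Fin (p+q+2) → ℝ // v ≠ 0} // v ∈ mkQ ⁻¹' Aset p q V₀ V₁ φ} =>
        (⟨sigmaVec p q V₀ V₁ hcompl φ (v : {v : Fin (p+q+2) → ℝ // v ≠ 0}), by
          obtain ⟨hφv, hQv, hQ1⟩ := mkQ_mem_facts p q V₀ V₁ hcompl φ v.2
          exact sigmaVec_mem p q V₀ V₁ hcompl φ hφv hQv hQ1⟩ : sheetPair p q V₀ V₁) := by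
    funext v
    apply Subtype.ext
    exact sigmaSec_rep_eq p q V₀ V₁ hcompl φ v.2
  rw [heq]
  apply Continuous.subtype_mk
  have base : Continuous fun v : {v : {v : Fin (p+q+2) → ℝ // v ≠ 0} //
      v ∈ mkQ ⁻¹' Aset p q V₀ V₁ φ} => ((v : {v : Fin (p+q+2) → ℝ // v ≠ 0}) :
        Fin (p+q+2) → ℝ) := continuous_subtype_val.comp continuous_subtype_val
  have cφ : Continuous fun v : {v : {v : Fin (p+q+2) → ℝ // v ≠ 0} //
      v ∈ mkQ ⁻¹' Aset p q V₀ V₁ φ} => φ ((v : {v : Fin (p+q+2) → ℝ // v ≠ 0}) :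
        Fin (p+q+2) → ℝ) := φ.continuous_of_finiteDimensional.comp base
  have cpr0 : Continuous fun v : {v : {v : Fin (p+q+2) → ℝ // v ≠ 0} //
      v ∈ mkQ ⁻¹' Aset p q V₀ V₁ φ} => pr0 p q V₀ V₁ hcompl
        ((v : {v : Fin (p+q+2) → ℝ // v ≠ 0}) : Fin (p+q+2) → ℝ) :=
    (pr0 p q V₀ V₁ hcompl).continuous_of_finiteDimensional.comp base
  have cpr1 : Continuous fun v : {v : {v : Fin (p+q+2) → ℝ // v ≠ 0} //
      v ∈ mkQ ⁻¹' Aset p q V₀ V₁ φ} => pr1 p q V₀ V₁ hcompl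
        ((v : {v : Fin (p+q+2) → ℝ // v ≠ 0}) : Fin (p+q+2) → ℝ) :=
    (pr1 p q V₀ V₁ hcompl).continuous_of_finiteDimensional.comp base
  have cQ : Continuous fun v : {v : {v : Fin (p+q+2) → ℝ // v ≠ 0} //
      v ∈ mkQ ⁻¹' Aset p q V₀ V₁ φ} => bForm p q
        (pr0 p q V₀ V₁ hcompl ((v : {v : Fin (p+q+2) → ℝ // v ≠ 0}) : Fin (p+q+2) → ℝ))
        (pr0 p q V₀ V₁ hcompl ((v : {v : Fin (p+q+2) → ℝ // v ≠ 0}) : Fin (p+q+2) → ℝ)) :=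
    (continuous_bForm p q).comp (cpr0.prodMk cpr0)
  have ccoef : Continuous fun v : {v : {v : Fin (p+q+2) → ℝ // v ≠ 0} //
      v ∈ mkQ ⁻¹' Aset p q V₀ V₁ φ} => coefφ p q V₀ V₁ hcompl φ
        ((v : {v : Fin (p+q+2) → ℝ // v ≠ 0}) : Fin (p+q+2) → ℝ) := by
    unfold coefφ
    apply Continuous.div cφ ((cφ.abs).mul ((cQ.neg).sqrt))
    intro v
    obtain ⟨hφv, hQv, _⟩ := mkQ_mem_facts p q V₀ V₁ hcompl φ v.2
    exact ne_of_gt (mul_pos (abs_pos.2 hφv) (Real.sqrt_pos.2 (by simp only [Pi.neg_apply]; linarith)))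
  exact (ccoef.smul cpr0).prodMk (ccoef.smul cpr1)

lemma piCan_sigmaSec (y : {x : ℙ ℝ (Fin (p + q + 2) → ℝ) // x ∈ Aset p q V₀ V₁ φ}) :
    piCan p q V₀ V₁ hcompl (sigmaSec p q V₀ V₁ hcompl φ y) = ⟨y.1, y.2.1⟩ := by
  apply Subtype.ext
  obtain ⟨hφ, hQ, _⟩ := rep_facts p q V₀ V₁ hcompl φ y.2
  show Projectivization.mk ℝ _ _ = y.1
  rw [show y.1 = Projectivization.mk ℝ (y : ℙ ℝ (Fin (p + q + 2) → ℝ)).rep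
    (Projectivization.rep_nonzero _) from (Projectivization.mk_rep _).symm]
  rw [Projectivization.mk_eq_mk_iff']
  exact ⟨coefφ p q V₀ V₁ hcompl φ (y : ℙ ℝ (Fin (p + q + 2) → ℝ)).rep,
    (sigmaVec_sum p q V₀ V₁ hcompl φ _).symm⟩

lemma phi_sigmaSec_pos (y : {x : ℙ ℝ (Fin (p + q + 2) → ℝ) // x ∈ Aset p q V₀ V₁ φ}) :
    0 < φ ((sigmaSec p q V₀ V₁ hcompl φ y).1.1 + (sigmaSec p q V₀ V₁ hcompl φ y).1.2) := by
  obtain ⟨hφ, hQ, _⟩ := rep_facts p q V₀ V₁ hcompl φ y.2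
  exact phi_sigmaVec_pos p q V₀ V₁ hcompl φ hφ hQ

lemma continuous_piCan : Continuous (piCan p q V₀ V₁ hcompl) := by
  apply Continuous.subtype_mk
  show Continuous fun s : sheetPair p q V₀ V₁ =>
    Projectivization.mk ℝ (s.1.1 + s.1.2) (sheet_sum_ne_zero p q V₀ V₁ hcompl s)
  have : (fun s : sheetPair p q V₀ V₁ =>
      Projectivization.mk ℝ (s.1.1 + s.1.2) (sheet_sum_ne_zero p q V₀ V₁ hcompl s)) =
      mkQ ∘ (fun s : sheetPair p q V₀ V₁ =>
        (⟨s.1.1 + s.1.2, sheet_sum_ne_zero p q V₀ V₁ hcompl s⟩ :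
          {v : Fin (p+q+2) → ℝ // v ≠ 0})) := rfl
  rw [this]
  exact isQuotientMap_mkQ.continuous.comp (Continuous.subtype_mk
    (((continuous_fst.comp continuous_subtype_val).add
      (continuous_snd.comp continuous_subtype_val))) _)

lemma phi_rep_piCan_ne_iff (s : sheetPair p q V₀ V₁) :
    φ ((piCan p q V₀ V₁ hcompl s : ℙ ℝ (Fin (p + q + 2) → ℝ))).rep ≠ 0 ↔
      φ (s.1.1 + s.1.2) ≠ 0 := by
  obtain ⟨a, ha, hrep⟩ := exists_rep_eq (piCan p q V₀ V₁ hcompl s : ℙ ℝ (Fin (p+q+2) → ℝ))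
    (s.1.1 + s.1.2) (sheet_sum_ne_zero p q V₀ V₁ hcompl s) rfl
  rw [hrep, map_smul, smul_eq_mul, mul_ne_zero_iff]
  simp [ha]

/-- Possibly negate a sheet pair, according to a boolean. -/
def negIf (b : Bool) (s : sheetPair p q V₀ V₁) : sheetPair p q V₀ V₁ :=
  ⟨(if b then (1:ℝ) else -1) • s.1, by
    obtain ⟨h₀, h₁, hb₀, hb₁⟩ := s.2
    refine ⟨V₀.smul_mem _ h₀, V₁.smul_mem _ h₁, ?_, ?_⟩ <;>
      cases b <;>
        simp [Prod.smul_fst, Prod.smul_snd, bForm_smul_left, bForm_smul_right,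
          bForm_neg_neg, hb₀, hb₁]⟩

lemma negIf_sum (b : Bool) (s : sheetPair p q V₀ V₁) :
    (negIf p q V₀ V₁ b s).1.1 + (negIf p q V₀ V₁ b s).1.2 =
      (if b then (1:ℝ) else -1) • (s.1.1 + s.1.2) := by
  show ((if b then (1:ℝ) else -1) • s.1).1 + ((if b then (1:ℝ) else -1) • s.1).2 = _
  rw [Prod.smul_fst, Prod.smul_snd, ← smul_add]

lemma piCan_negIf (hcompl : IsCompl V₀ V₁) (b : Bool) (s : sheetPair p q V₀ V₁) :
    piCan p q V₀ V₁ hcompl (negIf p q V₀ V₁ b s) = piCan p q V₀ V₁ hcompl s := by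
  rw [piCan_eq_iff]
  cases b
  · right
    show ((-1 : ℝ)) • s.1 = -s.1
    rw [neg_one_smul]
  · left
    show ((1 : ℝ)) • s.1 = s.1
    rw [one_smul]

lemma negIf_true (s : sheetPair p q V₀ V₁) : negIf p q V₀ V₁ true s = s := by
  apply Subtype.ext
  show ((1 : ℝ)) • s.1 = s.1
  rw [one_smul]

lemma negIf_false_val (s : sheetPair p q V₀ V₁) : (negIf p q V₀ V₁ false s).1 = -s.1 := by
  show ((-1 : ℝ)) • s.1 = -s.1
  rw [neg_one_smul]

end SigmaSec

section Triv

variable (p q : ℕ) (V₀ V₁ : Submodule ℝ (Fin (p + q + 2) → ℝ))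
  (hcompl : IsCompl V₀ V₁) (φ : (Fin (p + q + 2) → ℝ) →ₗ[ℝ] ℝ)

lemma sigmaSec_eq_pos (s : sheetPair p q V₀ V₁)
    (y : {x : ℙ ℝ (Fin (p + q + 2) → ℝ) // x ∈ Aset p q V₀ V₁ φ})
    (hy : (y : ℙ ℝ (Fin (p + q + 2) → ℝ)) =
      (piCan p q V₀ V₁ hcompl s : ℙ ℝ (Fin (p + q + 2) → ℝ)))
    (hpos : 0 < φ (s.1.1 + s.1.2)) : sigmaSec p q V₀ V₁ hcompl φ y = s := by
  have hpi : piCan p q V₀ V₁ hcompl (sigmaSec p q V₀ V₁ hcompl φ y) =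
      piCan p q V₀ V₁ hcompl s := by
    rw [piCan_sigmaSec]
    exact Subtype.ext hy
  have hpos' := phi_sigmaSec_pos p q V₀ V₁ hcompl φ y
  rcases (piCan_eq_iff p q V₀ V₁ hcompl s (sigmaSec p q V₀ V₁ hcompl φ y)).1 hpi with h1 | h1
  · exact Subtype.ext h1
  · exfalso
    have hsum : (sigmaSec p q V₀ V₁ hcompl φ y).1.1 + (sigmaSec p q V₀ V₁ hcompl φ y).1.2 =
        -(s.1.1 + s.1.2) := by
      rw [h1, Prod.fst_neg, Prod.snd_neg, neg_add]
    rw [hsum, map_neg] at hpos'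
    linarith

lemma sigmaSec_eq_neg (s : sheetPair p q V₀ V₁)
    (y : {x : ℙ ℝ (Fin (p + q + 2) → ℝ) // x ∈ Aset p q V₀ V₁ φ})
    (hy : (y : ℙ ℝ (Fin (p + q + 2) → ℝ)) =
      (piCan p q V₀ V₁ hcompl s : ℙ ℝ (Fin (p + q + 2) → ℝ)))
    (hneg : φ (s.1.1 + s.1.2) < 0) : (sigmaSec p q V₀ V₁ hcompl φ y).1 = -s.1 := by
  have hpi : piCan p q V₀ V₁ hcompl (sigmaSec p q V₀ V₁ hcompl φ y) =
      piCan p q V₀ V₁ hcompl s := by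
    rw [piCan_sigmaSec]
    exact Subtype.ext hy
  have hpos' := phi_sigmaSec_pos p q V₀ V₁ hcompl φ y
  rcases (piCan_eq_iff p q V₀ V₁ hcompl s (sigmaSec p q V₀ V₁ hcompl φ y)).1 hpi with h1 | h1
  · exfalso
    rw [h1] at hpos'
    linarith
  · exact h1

/-- The trivializing forward map. -/
def trivFun (s : sheetPair p q V₀ V₁) : U0 p q V₀ V₁ × Bool :=
  (piCan p q V₀ V₁ hcompl s, decide (0 < φ (s.1.1 + s.1.2)))

/-- The trivializing inverse map. -/
def trivInv (s₀ : sheetPair p q V₀ V₁) (z : U0 p q V₀ V₁ × Bool) : sheetPair p q V₀ V₁ :=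
  if h : φ (z.1 : ℙ ℝ (Fin (p + q + 2) → ℝ)).rep ≠ 0 then
    negIf p q V₀ V₁ z.2 (sigmaSec p q V₀ V₁ hcompl φ
      ⟨(z.1 : ℙ ℝ (Fin (p + q + 2) → ℝ)), ⟨z.1.2, h⟩⟩)
  else s₀

lemma isOpen_phi_ne : IsOpen {x : ℙ ℝ (Fin (p + q + 2) → ℝ) | φ x.rep ≠ 0} := by
  apply isOpen_invariant (P := fun v => φ v ≠ 0)
  · exact IsOpen.preimage φ.continuous_of_finiteDimensional isOpen_ne
  · intro c hc v hv
    rw [map_smul, smul_eq_mul]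
    exact mul_ne_zero hc hv

/-- The partial homeomorphism underlying the trivialization. -/
def trivPH (s₀ : sheetPair p q V₀ V₁) :
    OpenPartialHomeomorph (sheetPair p q V₀ V₁) (U0 p q V₀ V₁ × Bool) where
  toFun := trivFun p q V₀ V₁ hcompl φ
  invFun := trivInv p q V₀ V₁ hcompl φ s₀
  source := {s : sheetPair p q V₀ V₁ | φ (s.1.1 + s.1.2) ≠ 0}
  target := (Subtype.val ⁻¹' {x : ℙ ℝ (Fin (p + q + 2) → ℝ) | φ x.rep ≠ 0}) ×ˢ
    (Set.univ : Set Bool)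
  map_source' := by
    intro s hs
    constructor
    · exact (phi_rep_piCan_ne_iff p q V₀ V₁ hcompl φ s).2 hs
    · trivial
  map_target' := by
    rintro ⟨y, b⟩ hz
    have hy : φ (y : ℙ ℝ (Fin (p + q + 2) → ℝ)).rep ≠ 0 := hz.1
    show φ ((trivInv p q V₀ V₁ hcompl φ s₀ (y, b)).1.1 +
      (trivInv p q V₀ V₁ hcompl φ s₀ (y, b)).1.2) ≠ 0
    unfold trivInv
    rw [dif_pos hy]
    have hpos := phi_sigmaSec_pos p q V₀ V₁ hcompl φ
      ⟨(y : ℙ ℝ (Fin (p + q + 2) → ℝ)), ⟨y.2, hy⟩⟩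
    cases b
    · rw [negIf_sum]
      simp only [Bool.false_eq_true, if_false, neg_smul, one_smul, map_neg]
      linarith
    · rw [negIf_sum]
      simp only [if_true, one_smul]
      linarith
  left_inv' := by
    intro s hs
    have hs' : φ (s.1.1 + s.1.2) ≠ 0 := hs
    have hφrep : φ ((piCan p q V₀ V₁ hcompl s : ℙ ℝ (Fin (p + q + 2) → ℝ))).rep ≠ 0 :=
      (phi_rep_piCan_ne_iff p q V₀ V₁ hcompl φ s).2 hs'
    show trivInv p q V₀ V₁ hcompl φ s₀ (trivFun p q V₀ V₁ hcompl φ s) = s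
    unfold trivInv trivFun
    rw [dif_pos hφrep]
    rcases lt_or_gt_of_ne hs' with hneg | hpos
    · rw [show decide (0 < φ (s.1.1 + s.1.2)) = false from
        decide_eq_false (not_lt.2 hneg.le)]
      apply Subtype.ext
      rw [negIf_false_val, sigmaSec_eq_neg p q V₀ V₁ hcompl φ s _ rfl hneg, neg_neg]
    · rw [show decide (0 < φ (s.1.1 + s.1.2)) = true from decide_eq_true hpos,
        negIf_true, sigmaSec_eq_pos p q V₀ V₁ hcompl φ s _ rfl hpos]
  right_inv' := by
    rintro ⟨y, b⟩ hz
    have hy : φ (y : ℙ ℝ (Fin (p + q + 2) → ℝ)).rep ≠ 0 := hz.1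
    show trivFun p q V₀ V₁ hcompl φ (trivInv p q V₀ V₁ hcompl φ s₀ (y, b)) = (y, b)
    unfold trivInv
    rw [dif_pos hy]
    unfold trivFun
    have hpos := phi_sigmaSec_pos p q V₀ V₁ hcompl φ
      ⟨(y : ℙ ℝ (Fin (p + q + 2) → ℝ)), ⟨y.2, hy⟩⟩
    refine Prod.ext_iff.2 ⟨?_, ?_⟩
    · show piCan p q V₀ V₁ hcompl _ = y
      rw [piCan_negIf, piCan_sigmaSec]
    · show decide (0 < φ _) = b
      cases b
      · rw [negIf_sum]
        simp only [Bool.false_eq_true, if_false, neg_smul, one_smul, map_neg]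
        rw [decide_eq_false_iff_not]
        intro hcon
        linarith
      · rw [negIf_sum]
        simp only [if_true, one_smul]
        exact decide_eq_true hpos
  open_source := by
    have hc : Continuous fun s : sheetPair p q V₀ V₁ => φ (s.1.1 + s.1.2) :=
      φ.continuous_of_finiteDimensional.comp
        ((continuous_fst.comp continuous_subtype_val).add
          (continuous_snd.comp continuous_subtype_val))
    exact IsOpen.preimage hc isOpen_ne
  open_target :=
    IsOpen.prod ((isOpen_phi_ne p q φ).preimage continuous_subtype_val) isOpen_univ
  continuousOn_toFun := by
    apply continuousOn_of_forall_continuousAt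
    intro s hs
    have hc : Continuous fun s : sheetPair p q V₀ V₁ => φ (s.1.1 + s.1.2) :=
      φ.continuous_of_finiteDimensional.comp
        ((continuous_fst.comp continuous_subtype_val).add
          (continuous_snd.comp continuous_subtype_val))
    apply ContinuousAt.prodMk
    · exact (continuous_piCan p q V₀ V₁ hcompl).continuousAt
    · rcases lt_or_gt_of_ne (hs : φ (s.1.1 + s.1.2) ≠ 0) with h | h
      · have hO : IsOpen {t : sheetPair p q V₀ V₁ | φ (t.1.1 + t.1.2) < 0} :=
          isOpen_lt hc continuous_const
        apply Filter.EventuallyEq.continuousAt (y := false)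
        filter_upwards [hO.mem_nhds h] with t ht
        exact decide_eq_false (not_lt.2 ht.le)
      · have hO : IsOpen {t : sheetPair p q V₀ V₁ | 0 < φ (t.1.1 + t.1.2)} :=
          isOpen_lt continuous_const hc
        apply Filter.EventuallyEq.continuousAt (y := true)
        filter_upwards [hO.mem_nhds h] with t ht
        exact decide_eq_true ht
  continuousOn_invFun := by
    rw [continuousOn_iff_continuous_restrict]
    have heq : ((Subtype.val ⁻¹' {x : ℙ ℝ (Fin (p + q + 2) → ℝ) | φ x.rep ≠ 0}) ×ˢ
        (Set.univ : Set Bool)).domRestrict (trivInv p q V₀ V₁ hcompl φ s₀) =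
        fun z : ↥((Subtype.val ⁻¹' {x : ℙ ℝ (Fin (p + q + 2) → ℝ) | φ x.rep ≠ 0}) ×ˢ
          (Set.univ : Set Bool)) =>
          negIf p q V₀ V₁ z.1.2 (sigmaSec p q V₀ V₁ hcompl φ
            ⟨(z.1.1 : ℙ ℝ (Fin (p + q + 2) → ℝ)), ⟨z.1.1.2, (by exact z.2.1)⟩⟩) := by
      funext z
      show trivInv p q V₀ V₁ hcompl φ s₀ z.1 = _
      have hz : φ ((z.1.1 : ℙ ℝ (Fin (p + q + 2) → ℝ))).rep ≠ 0 := z.2.1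
      unfold trivInv
      rw [dif_pos hz]
    rw [heq]
    unfold negIf
    apply Continuous.subtype_mk
    refine Continuous.smul (f := fun x : ↥((Subtype.val ⁻¹' {x : ℙ ℝ (Fin (p + q + 2) → ℝ) | φ x.rep ≠ 0}) ×ˢ
        (Set.univ : Set Bool)) => if x.1.2 then (1:ℝ) else -1) ?_ ?_
    · apply Continuous.comp (continuous_of_discreteTopology
        (f := fun b : Bool => if b then (1:ℝ) else -1))
      exact continuous_snd.comp continuous_subtype_val
    · apply Continuous.subtype_val
      exact (continuous_sigmaSec p q V₀ V₁ hcompl φ).comp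
        (Continuous.subtype_mk
          (continuous_subtype_val.comp (continuous_fst.comp continuous_subtype_val)) _)

/-- The trivialization of `piCan` over the chart region of `φ`. -/
def trivi (s₀ : sheetPair p q V₀ V₁) :
    Bundle.Trivialization Bool (piCan p q V₀ V₁ hcompl) where
  toOpenPartialHomeomorph := trivPH p q V₀ V₁ hcompl φ s₀
  baseSet := Subtype.val ⁻¹' {x : ℙ ℝ (Fin (p + q + 2) → ℝ) | φ x.rep ≠ 0}
  open_baseSet := (isOpen_phi_ne p q φ).preimage continuous_subtype_val
  source_eq := Set.ext fun s => (phi_rep_piCan_ne_iff p q V₀ V₁ hcompl φ s).symm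
  target_eq := rfl
  proj_toFun := fun _ _ => rfl

lemma piCan_evenlyCovered (x : U0 p q V₀ V₁) :
    IsEvenlyCovered (piCan p q V₀ V₁ hcompl) (x : U0 p q V₀ V₁) Bool := by
  obtain ⟨v₀, h₀, v₁, h₁, hne, heq, hQ0, hQ1⟩ := x.2
  obtain ⟨i, hi⟩ := Function.ne_iff.1 hne
  refine IsEvenlyCovered.of_trivialization
    (t := trivi p q V₀ V₁ hcompl (LinearMap.proj i) ⟨(v₀, v₁), h₀, h₁, hQ0, hQ1⟩) ?_
  show (LinearMap.proj i : (Fin (p + q + 2) → ℝ) →ₗ[ℝ] ℝ)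
    (x : ℙ ℝ (Fin (p + q + 2) → ℝ)).rep ≠ 0
  obtain ⟨a, ha, hrep⟩ := exists_rep_eq (x : ℙ ℝ (Fin (p + q + 2) → ℝ)) (v₀ + v₁) hne heq
  rw [hrep]
  simp only [LinearMap.proj_apply, Pi.smul_apply, smul_eq_mul]
  apply mul_ne_zero ha
  simpa using hi

end Triv

end Stmt2Aux

/-- The natural map `S → U₀` is a two-sheeted covering map. -/
theorem stmt_2 (p q : ℕ) (hp : 1 ≤ p) (hq : 1 ≤ q)
    (V₀ V₁ : Submodule ℝ (Fin (p + q + 2) → ℝ))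
    (hcompl : IsCompl V₀ V₁)
    (horth : ∀ v₀ ∈ V₀, ∀ v₁ ∈ V₁, bForm p q v₀ v₁ = 0)
    (p₀ q₀ p₁ q₁ : ℕ) (hp₀ : 1 ≤ p₀) (hq₀ : 1 ≤ q₀) (hp₁ : 1 ≤ p₁) (hq₁ : 1 ≤ q₁)
    (hsig₀ : HasSignature p q V₀ p₀ q₀) (hsig₁ : HasSignature p q V₁ p₁ q₁) :
    (∃ π : sheetPair p q V₀ V₁ → U0 p q V₀ V₁,
      ∀ s : sheetPair p q V₀ V₁,
        (π s : ℙ ℝ (Fin (p + q + 2) → ℝ)).submodule =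
          Submodule.span ℝ {s.1.1 + s.1.2}) ∧
    ∀ π : sheetPair p q V₀ V₁ → U0 p q V₀ V₁,
      (∀ s : sheetPair p q V₀ V₁,
        (π s : ℙ ℝ (Fin (p + q + 2) → ℝ)).submodule =
          Submodule.span ℝ {s.1.1 + s.1.2}) →
      IsCoveringMap π ∧
      ∀ s t : sheetPair p q V₀ V₁, π t = π s ↔ (t.1 = s.1 ∨ t.1 = -s.1) := by
  constructor
  · exact ⟨piCan p q V₀ V₁ hcompl, fun s => piCan_submodule p q V₀ V₁ hcompl s⟩
  · intro π hπ
    have hπe : π = piCan p q V₀ V₁ hcompl := pi_eq p q V₀ V₁ hcompl π hπ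
    subst hπe
    constructor
    · intro x
      exact (piCan_evenlyCovered p q V₀ V₁ hcompl x).to_isEvenlyCovered_preimage
    · intro s t
      exact piCan_eq_iff p q V₀ V₁ hcompl s t
end
end

section
/- Let p, q ≥ 1. For any two points x, y of the model diamond 𝔻 there exists z ∈ 𝔻 with x ∈ C(z) and y ∈ C(z); that is, any two points of the diamond lie on a common lightcone centered at a point of the diamond. -/
noncomputable section

open scoped LinearAlgebra.Projectivization ENNReal
open Projectivization Filter Topology Set

variable {W : Type} [AddCommGroup W] [Module ℝ W] [TopologicalSpace W]

namespace Stmt3Aux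

lemma b0_comm (m : ℕ) (x y : Fin (m+1) → ℝ) : b0 m x y = b0 m y x :=
  Finset.sum_congr rfl (fun i _ => by ring)

lemma b0_lin (m : ℕ) (r s : ℝ) (v e x : Fin (m+1) → ℝ) :
    b0 m (fun i => r * v i + s * e i) x = r * b0 m v x + s * b0 m e x := by
  unfold b0
  rw [Finset.mul_sum, Finset.mul_sum, ← Finset.sum_add_distrib]
  exact Finset.sum_congr rfl (fun i _ => by ring)

lemma b0_smul_left (m : ℕ) (r : ℝ) (x y : Fin (m+1) → ℝ) :
    b0 m (fun i => r * x i) y = r * b0 m x y := by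
  unfold b0; rw [Finset.mul_sum]
  exact Finset.sum_congr rfl (fun i _ => by ring)

lemma b0_smul_right (m : ℕ) (r : ℝ) (x y : Fin (m+1) → ℝ) :
    b0 m x (fun i => r * y i) = r * b0 m x y := by
  rw [b0_comm, b0_smul_left, b0_comm]

/-- The Euclidean part of the form. -/
def sE (m : ℕ) (x y : Fin (m+1) → ℝ) : ℝ := ∑ i : Fin m, x i.castSucc * y i.castSucc

lemma b0_split (m : ℕ) (x y : Fin (m+1) → ℝ) :
    b0 m x y = x (Fin.last m) * y (Fin.last m) - sE m x y := by
  unfold b0 sE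
  rw [Fin.sum_univ_castSucc]
  rw [Finset.sum_congr rfl (fun (i : Fin m) _ =>
    show (if ((i.castSucc : Fin (m+1)) : ℕ) < m then (-1:ℝ) else 1) * x i.castSucc * y i.castSucc
        = -(x i.castSucc * y i.castSucc) by
      rw [if_pos (by simpa using i.is_lt)]; ring)]
  rw [if_neg (by simp : ¬(((Fin.last m : Fin (m+1)) : ℕ) < m)), Finset.sum_neg_distrib]
  ring

lemma sE_nonneg (m : ℕ) (x : Fin (m+1) → ℝ) : 0 ≤ sE m x x :=
  Finset.sum_nonneg (fun i _ => mul_self_nonneg _)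

lemma sE_cs (m : ℕ) (x y : Fin (m+1) → ℝ) : (sE m x y)^2 ≤ sE m x x * sE m y y := by
  have h := Finset.sum_mul_sq_le_sq_mul_sq Finset.univ
    (fun i : Fin m => x i.castSucc) (fun i : Fin m => y i.castSucc)
  unfold sE
  calc (∑ i : Fin m, x i.castSucc * y i.castSucc)^2
      ≤ (∑ i : Fin m, (x i.castSucc)^2) * (∑ i : Fin m, (y i.castSucc)^2) := h
    _ = _ := by
        congr 1 <;> exact Finset.sum_congr rfl (fun i _ => pow_two _)

lemma vl_ge_one (m : ℕ) (v : Fin (m+1) → ℝ) (hv : b0 m v v = 1)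
    (hvp : 0 < v (Fin.last m)) : 1 ≤ v (Fin.last m) := by
  have h := b0_split m v v
  have h2 := sE_nonneg m v
  nlinarith [hv]

lemma c_ge_one (m : ℕ) (v v' : Fin (m+1) → ℝ) (hv : b0 m v v = 1) (hv' : b0 m v' v' = 1)
    (hvp : 0 < v (Fin.last m)) (hv'p : 0 < v' (Fin.last m)) : 1 ≤ b0 m v v' := by
  have h1 := b0_split m v v
  have h2 := b0_split m v' v'
  have h3 := b0_split m v v'
  have hcs := sE_cs m v v'
  have hv1 := vl_ge_one m v hv hvp
  have hv2 := vl_ge_one m v' hv' hv'p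
  have hA : sE m v v = v (Fin.last m) * v (Fin.last m) - 1 := by linarith
  have hB : sE m v' v' = v' (Fin.last m) * v' (Fin.last m) - 1 := by linarith
  rw [hA, hB] at hcs
  have hL1 : 1 ≤ v (Fin.last m) * v' (Fin.last m) := by nlinarith
  have hS2 : (sE m v v')^2 ≤ (v (Fin.last m) * v' (Fin.last m) - 1)^2 := by
    nlinarith [sq_nonneg (v (Fin.last m) - v' (Fin.last m))]
  have habs := Real.sqrt_le_sqrt hS2
  rw [Real.sqrt_sq_eq_abs, Real.sqrt_sq_eq_abs] at habs
  have hfin : sE m v v' ≤ v (Fin.last m) * v' (Fin.last m) - 1 :=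
    le_trans (le_abs_self _) (le_trans habs (le_of_eq (abs_of_nonneg (by linarith))))
  linarith

lemma posLast (m : ℕ) (v a : Fin (m+1) → ℝ) (hv : b0 m v v = 1)
    (hvp : 0 < v (Fin.last m)) (ha : b0 m a a = 1) (hav : 0 < b0 m a v) :
    0 < a (Fin.last m) := by
  by_contra hcon
  push_neg at hcon
  have h1 := b0_split m v v
  have h2 := b0_split m a a
  have h3 := b0_split m a v
  have hcs := sE_cs m a v
  have hv1 := vl_ge_one m v hv hvp
  have hsa := sE_nonneg m a
  have hA : sE m a a = a (Fin.last m) * a (Fin.last m) - 1 := by linarith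
  have hV : sE m v v = v (Fin.last m) * v (Fin.last m) - 1 := by linarith
  rw [hA, hV] at hcs
  have hal1 : a (Fin.last m) ≤ -1 := by nlinarith
  have hS : sE m a v < a (Fin.last m) * v (Fin.last m) := by linarith
  have hmul : a (Fin.last m) * v (Fin.last m) ≤ -1 := by nlinarith
  have hsum2 : sE m a v + a (Fin.last m) * v (Fin.last m) < -2 := by linarith
  have hgt : (a (Fin.last m) * v (Fin.last m))^2 < (sE m a v)^2 := by nlinarith
  nlinarith [sq_nonneg (a (Fin.last m)), sq_nonneg (v (Fin.last m))]

lemma eq_of_c_one (m : ℕ) (v v' : Fin (m+1) → ℝ) (hv : b0 m v v = 1) (hv' : b0 m v' v' = 1)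
    (hvp : 0 < v (Fin.last m)) (hv'p : 0 < v' (Fin.last m)) (hc : b0 m v v' = 1) : v = v' := by
  have h1 := b0_split m v v
  have h2 := b0_split m v' v'
  have h3 := b0_split m v v'
  have hcs := sE_cs m v v'
  have hv1 := vl_ge_one m v hv hvp
  have hv2 := vl_ge_one m v' hv' hv'p
  have hA : sE m v v = v (Fin.last m) * v (Fin.last m) - 1 := by linarith
  have hB : sE m v' v' = v' (Fin.last m) * v' (Fin.last m) - 1 := by linarith
  have hS : sE m v v' = v (Fin.last m) * v' (Fin.last m) - 1 := by linarith
  rw [hA, hB, hS] at hcs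
  have hll : v (Fin.last m) = v' (Fin.last m) := by
    have hsq0 : (v (Fin.last m) - v' (Fin.last m))^2 ≤ 0 := by nlinarith
    have := le_antisymm hsq0 (sq_nonneg _)
    have := sq_eq_zero_iff.1 this
    linarith
  have hsum : ∑ i : Fin m, (v i.castSucc - v' i.castSucc)^2 = 0 := by
    have hexp : ∑ i : Fin m, (v i.castSucc - v' i.castSucc)^2
        = sE m v v - 2 * sE m v v' + sE m v' v' := by
      unfold sE
      rw [Finset.mul_sum, ← Finset.sum_sub_distrib, ← Finset.sum_add_distrib]
      exact Finset.sum_congr rfl (fun i _ => by ring)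
    rw [hexp, hA, hB, hS, hll]
    ring
  funext i
  rcases Fin.eq_castSucc_or_eq_last i with ⟨j, rfl⟩ | rfl
  · have hz := (Finset.sum_eq_zero_iff_of_nonneg (fun i _ => sq_nonneg _)).1 hsum j
      (Finset.mem_univ j)
    have h0 : v j.castSucc - v' j.castSucc = 0 := sq_eq_zero_iff.1 hz
    linarith
  · exact hll

/-- arcosh -/
noncomputable def del (c : ℝ) : ℝ := Real.log (c + Real.sqrt (c^2 - 1))

lemma del_facts (c : ℝ) (hc : 1 ≤ c) :
    0 ≤ del c ∧ Real.cosh (del c) = c ∧ Real.sinh (del c) = Real.sqrt (c^2 - 1) := by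
  have hc2 : (0:ℝ) ≤ c^2 - 1 := by nlinarith
  have hs := Real.sqrt_nonneg (c^2 - 1)
  have hsq : Real.sqrt (c^2-1) * Real.sqrt (c^2-1) = c^2 - 1 := Real.mul_self_sqrt hc2
  have ht1 : (1:ℝ) ≤ c + Real.sqrt (c^2 - 1) := by linarith
  have ht0 : (0:ℝ) < c + Real.sqrt (c^2 - 1) := by linarith
  have hmul : (c + Real.sqrt (c^2 - 1)) * (c - Real.sqrt (c^2 - 1)) = 1 := by nlinarith
  have hinv : (c + Real.sqrt (c^2 - 1))⁻¹ = c - Real.sqrt (c^2 - 1) :=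
    inv_eq_of_mul_eq_one_right hmul
  refine ⟨Real.log_nonneg ht1, ?_, ?_⟩
  · rw [del, Real.cosh_eq, Real.exp_neg, Real.exp_log ht0, hinv]
    ring
  · rw [del, Real.sinh_eq, Real.exp_neg, Real.exp_log ht0, hinv]
    ring

lemma b0_single (m : ℕ) (hm : 1 ≤ m) (x : Fin (m+1) → ℝ) :
    b0 m (fun j => if j = (⟨0, by omega⟩ : Fin (m+1)) then (1:ℝ) else 0) x
      = - x ⟨0, by omega⟩ := by
  unfold b0
  rw [Finset.sum_eq_single (⟨0, by omega⟩ : Fin (m+1))]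
  · simp [show 0 < m from hm]
  · intro j _ hj
    have hj' : ¬ (j = 0) := by simpa using hj
    simp [hj']
  · intro h; exact absurd (Finset.mem_univ _) h

/-- existence of a unit spacelike vector realizing the geodesic direction -/
lemma existsE (m : ℕ) (hm : 1 ≤ m) (v v' : Fin (m+1) → ℝ)
    (hv : b0 m v v = 1) (hv' : b0 m v' v' = 1)
    (hvp : 0 < v (Fin.last m)) (hv'p : 0 < v' (Fin.last m)) :
    ∃ e : Fin (m+1) → ℝ, b0 m e e = -1 ∧ b0 m v e = 0 ∧
      b0 m v' e = - Real.sqrt ((b0 m v v')^2 - 1) := by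
  set c := b0 m v v' with hcdef
  have hc1 : 1 ≤ c := c_ge_one m v v' hv hv' hvp hv'p
  by_cases hc : 1 < c
  · have hpos : (0:ℝ) < c^2 - 1 := by nlinarith
    have hsp : (0:ℝ) < Real.sqrt (c^2-1) := Real.sqrt_pos.2 hpos
    have hsq : Real.sqrt (c^2-1) * Real.sqrt (c^2-1) = c^2 - 1 := Real.mul_self_sqrt hpos.le
    set r := (Real.sqrt (c^2-1))⁻¹ with hr
    have h1 : b0 m v' (fun i => r * v' i + (-(c*r)) * v i)
        = r * 1 + -(c*r) * c := by
      rw [b0_comm, b0_lin, hv', ← hcdef]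
    have h2 : b0 m v (fun i => r * v' i + (-(c*r)) * v i)
        = r * c + -(c*r) * 1 := by
      rw [b0_comm, b0_lin, hv, b0_comm m v' v, ← hcdef]
    refine ⟨fun i => r * v' i + (-(c*r)) * v i, ?_, ?_, ?_⟩
    · rw [b0_lin, h1, h2, hr]
      field_simp
      nlinarith [hsq]
    · rw [h2, hr]
      field_simp
      ring
    · rw [h1, hr]
      field_simp
      nlinarith [hsq]
  · have hc' : c = 1 := le_antisymm (not_lt.1 hc) hc1
    have hvv : v = v' := eq_of_c_one m v v' hv hv' hvp hv'p hc'
    have hs0 : Real.sqrt (c^2 - 1) = 0 := by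
      rw [hc']; norm_num
    set i0 : Fin (m+1) := ⟨0, by omega⟩ with hi0
    set t := v i0 with htdef
    set g : Fin (m+1) → ℝ := fun j => if j = i0 then (1:ℝ) else 0 with hg
    have hgv : b0 m g v = -t := b0_single m hm v
    have hgg : b0 m g g = -1 := by
      have hx := b0_single m hm g
      rw [hx, hg]
      simp [hi0]
    set e0 : Fin (m+1) → ℝ := fun i => 1 * g i + t * v i with he0
    have he0v : b0 m e0 v = 0 := by
      rw [he0, b0_lin, hgv, hv]; ring
    have he0e0 : b0 m e0 e0 = -(1 + t^2) := by
      rw [he0, b0_lin]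
      have h1 : b0 m g e0 = -1 + t * (-t) := by
        rw [b0_comm, he0, b0_lin, hgg, b0_comm m v g, hgv]; ring
      have h2 : b0 m v e0 = 0 := by rw [b0_comm]; exact he0v
      rw [h1, h2]; ring
    have hpos : (0:ℝ) < 1 + t^2 := by positivity
    have hsppos : (0:ℝ) < Real.sqrt (1 + t^2) := Real.sqrt_pos.2 hpos
    have hsq : Real.sqrt (1+t^2) * Real.sqrt (1+t^2) = 1 + t^2 := Real.mul_self_sqrt hpos.le
    set r := (Real.sqrt (1+t^2))⁻¹ with hr
    refine ⟨fun i => r * e0 i, ?_, ?_, ?_⟩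
    · have hx : b0 m (fun i => r * e0 i) (fun i => r * e0 i) = r * (r * b0 m e0 e0) := by
        rw [b0_smul_right, b0_smul_left]
      rw [hx, he0e0, hr]
      field_simp
      rw [Real.sq_sqrt hpos.le]
    · rw [b0_smul_right, b0_comm m v e0, he0v]; ring
    · rw [hs0, ← hvv, b0_smul_right, b0_comm m v e0, he0v]; ring

lemma keyA (m : ℕ) (hm : 1 ≤ m) (v v' : Fin (m+1) → ℝ)
    (hv : b0 m v v = 1) (hv' : b0 m v' v' = 1)
    (hvp : 0 < v (Fin.last m)) (hv'p : 0 < v' (Fin.last m)) :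
    ∃ δ : ℝ, 0 ≤ δ ∧ b0 m v v' = Real.cosh δ ∧
      ∀ u : ℝ, ∃ a : Fin (m+1) → ℝ, b0 m a a = 1 ∧ 0 < a (Fin.last m) ∧
        b0 m a v = Real.cosh u ∧ b0 m a v' = Real.cosh (u - δ) := by
  set c := b0 m v v' with hcdef
  have hc1 : 1 ≤ c := c_ge_one m v v' hv hv' hvp hv'p
  obtain ⟨hd0, hdc, hds⟩ := del_facts c hc1
  obtain ⟨e, hee, hve, hv'e⟩ := existsE m hm v v' hv hv' hvp hv'p
  rw [← hcdef] at hv'e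
  refine ⟨del c, hd0, hdc.symm, fun u => ?_⟩
  set a : Fin (m+1) → ℝ := fun i => Real.cosh u * v i + Real.sinh u * e i with ha
  have hav : b0 m a v = Real.cosh u := by
    rw [ha, b0_lin, hv, b0_comm m e v, hve]; ring
  have hav' : b0 m a v' = Real.cosh (u - del c) := by
    rw [ha, b0_lin, b0_comm m e v', hv'e, Real.cosh_sub, hdc, hds, ← hcdef]
    ring
  have haa : b0 m a a = 1 := by
    have h1 : b0 m v a = Real.cosh u := by rw [b0_comm]; exact hav
    have h2 : b0 m e a = - Real.sinh u := by
      rw [b0_comm, ha, b0_lin, hve, hee]; ring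
    have h3 := Real.cosh_sq_sub_sinh_sq u
    rw [ha, b0_lin, h1, h2]
    nlinarith
  exact ⟨a, haa, posLast m v a hv hvp haa (hav ▸ Real.cosh_pos u), hav, hav'⟩

lemma b1_eq_neg_b0 (m : ℕ) (x y : Fin (m+1) → ℝ) : b1 m x y = - b0 m x y := by
  unfold b0 b1
  rw [← Finset.sum_neg_distrib]
  refine Finset.sum_congr rfl (fun i _ => ?_)
  by_cases h : (i:ℕ) < m <;> simp [h] <;> ring

lemma bPair_smul_smul (p q : ℕ) (r s : ℝ) (x y : PairV p q) :
    bPair p q (r • x) (s • y) = r * s * bPair p q x y := by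
  unfold bPair
  have h1 : (r • x).1 = fun i => r * x.1 i := by funext i; rfl
  have h2 : (s • y).1 = fun i => s * y.1 i := by funext i; rfl
  have h3 : (r • x).2 = fun i => r * x.2 i := by funext i; rfl
  have h4 : (s • y).2 = fun i => s * y.2 i := by funext i; rfl
  rw [h1, h2, h3, h4, b0_smul_left, b0_smul_right,
    b1_eq_neg_b0, b0_smul_left, b0_smul_right, b1_eq_neg_b0]
  ring

lemma rep_eq {p q : ℕ} (x : ℙ ℝ (PairV p q)) (v : PairV p q) (hv : v ≠ 0)
    (h : x = Projectivization.mk ℝ v hv) : ∃ r : ℝ, x.rep = r • v := by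
  obtain ⟨a, ha⟩ := Projectivization.exists_smul_eq_mk_rep ℝ v hv
  exact ⟨(a:ℝ), by rw [h, ← ha]; rfl⟩

end Stmt3Aux

open Stmt3Aux in
/-- Any two points of the model diamond lie on a common lightcone
centered at a point of the diamond. -/
theorem stmt_3 (p q : ℕ) (hp : 1 ≤ p) (hq : 1 ≤ q) :
    ∀ x ∈ diamond p q, ∀ y ∈ diamond p q,
      ∃ z ∈ diamond p q, x ∈ lightcone (bPair p q) z ∧ y ∈ lightcone (bPair p q) z := by
  intro x hx y hy
  obtain ⟨⟨v, w⟩, hx0, hxeq, hb0v, hvp, hb1w, hwq⟩ := hx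
  obtain ⟨⟨v', w'⟩, hy0, hyeq, hb0v', hv'p, hb1w', hw'q⟩ := hy
  have hb0w : b0 q w w = 1 := by
    have h := b1_eq_neg_b0 q w w; rw [hb1w] at h; linarith
  have hb0w' : b0 q w' w' = 1 := by
    have h := b1_eq_neg_b0 q w' w'; rw [hb1w'] at h; linarith
  obtain ⟨δ, hδ0, hcδ, hA⟩ := keyA p hp v v' hb0v hb0v' hvp hv'p
  obtain ⟨ε, hε0, hcε, hB⟩ := keyA q hq w w' hb0w hb0w' hwq hw'q
  set u : ℝ := (δ - ε)/2 with hu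
  obtain ⟨a, haa, hal, hav, hav'⟩ := hA u
  obtain ⟨b, hbb, hbl, hbw, hbw'⟩ := hB (-u)
  have hne : ((a, b) : PairV p q) ≠ 0 := by
    intro h0
    have hb : a = 0 := congrArg Prod.fst h0
    rw [hb] at hal
    simp at hal
  refine ⟨Projectivization.mk ℝ (a, b) hne,
    ⟨(a, b), hne, rfl, haa, hal, by rw [b1_eq_neg_b0, hbb], hbl⟩, ?_, ?_⟩
  · obtain ⟨r, hr⟩ := rep_eq x (v, w) hx0 hxeq
    obtain ⟨s, hs⟩ := rep_eq (Projectivization.mk ℝ ((a,b) : PairV p q) hne) (a, b) hne rfl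
    constructor
    · show bPair p q x.rep x.rep = 0
      rw [hr, bPair_smul_smul]
      have : bPair p q (v, w) (v, w) = 0 := by
        unfold bPair
        rw [show ((v,w) : PairV p q).1 = v from rfl, show ((v,w) : PairV p q).2 = w from rfl,
          hb0v, hb1w]
        ring
      rw [this]; ring
    · show bPair p q _ x.rep = 0
      rw [hs, hr, bPair_smul_smul]
      have : bPair p q (a, b) (v, w) = 0 := by
        unfold bPair
        rw [show ((a,b) : PairV p q).1 = a from rfl, show ((a,b) : PairV p q).2 = b from rfl,
          show ((v,w) : PairV p q).1 = v from rfl, show ((v,w) : PairV p q).2 = w from rfl,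
          hav, b1_eq_neg_b0, hbw, Real.cosh_neg]
        ring
      rw [this]; ring
  · obtain ⟨r, hr⟩ := rep_eq y (v', w') hy0 hyeq
    obtain ⟨s, hs⟩ := rep_eq (Projectivization.mk ℝ ((a,b) : PairV p q) hne) (a, b) hne rfl
    constructor
    · show bPair p q y.rep y.rep = 0
      rw [hr, bPair_smul_smul]
      have : bPair p q (v', w') (v', w') = 0 := by
        unfold bPair
        rw [show ((v',w') : PairV p q).1 = v' from rfl,
          show ((v',w') : PairV p q).2 = w' from rfl, hb0v', hb1w']
        ring
      rw [this]; ring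
    · show bPair p q _ y.rep = 0
      rw [hs, hr, bPair_smul_smul]
      have : bPair p q (a, b) (v', w') = 0 := by
        unfold bPair
        rw [show ((a,b) : PairV p q).1 = a from rfl, show ((a,b) : PairV p q).2 = b from rfl,
          show ((v',w') : PairV p q).1 = v' from rfl,
          show ((v',w') : PairV p q).2 = w' from rfl,
          hav', b1_eq_neg_b0, hbw']
        have harg : u - δ = -u - ε := by rw [hu]; ring
        rw [harg]
        ring
      rw [this]; ring
end
end
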